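/- arXiv:1807.01683 — 7 statements merged into one kernel-verified Lean document; each statement's English description precedes it below -/
import Mathlib

section
/- Projective F_q-footprint bound: Let q be a prime power, F_q a finite field with q elements, and m a positive integer. Let F_1, ..., F_r be nonzero, projectively reduced homogeneous polynomials in F_q[x_0, ..., x_m], let lm(F_i) denote the leading monomial of F_i with respect to the lexicographic order with x_0 ≻ x_1 ≻ ... ≻ x_m, and set S = {lm(F_1), ..., lm(F_r)}. Then there exists a nonnegative integer e_0 such that for all e ≥ e_0, the number of points of ℙ^m(F_q) at which all of F_1, ..., F_r vanish is at most |Δ_e(S)|. -/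
open scoped Classical

/-- An exponent vector `b` (representing the monomial `x_0^{b 0} ⋯ x_m^{b m}`) is
*projectively reduced* if `b j ≤ q - 1` for every index `j` that is smaller than some
index with a positive exponent. -/
def ProjReduced (q m : ℕ) (b : Fin (m+1) → ℕ) : Prop :=
  ∀ j : Fin (m+1), (∃ l : Fin (m+1), j < l ∧ 0 < b l) → b j ≤ q - 1

/-- `M̄_e`: projectively reduced monomials of degree `e` in `x_0, …, x_m`. -/
def MbarDeg (q m e : ℕ) : Set (Fin (m+1) → ℕ) :=
  {b | ProjReduced q m b ∧ ∑ i, b i = e}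

/-- The shadow `∇_e(S)`. -/
def shadow (q m e : ℕ) (S : Set (Fin (m+1) → ℕ)) : Set (Fin (m+1) → ℕ) :=
  {b ∈ MbarDeg q m e | ∃ a ∈ S, ∀ i, a i ≤ b i}

/-- The footprint `Δ_e(S)`. -/
def footprint (q m e : ℕ) (S : Set (Fin (m+1) → ℕ)) : Set (Fin (m+1) → ℕ) :=
  MbarDeg q m e \ shadow q m e S

/-- `M̄_e^{(ℓ)}`: members of `M̄_e` involving only `x_0, …, x_ℓ` and divisible by `x_ℓ`
(with `M̄_e^{(0)} = {x_0^e}`). -/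
def MbarDegL (q m e : ℕ) (ℓ : Fin (m+1)) : Set (Fin (m+1) → ℕ) :=
  {b ∈ MbarDeg q m e | (∀ i : Fin (m+1), ℓ < i → b i = 0) ∧ ((ℓ : ℕ) = 0 ∨ 0 < b ℓ)}

/-- `Δ_e^{(ℓ)}(S) := Δ_e(S) ∩ M̄_e^{(ℓ)}`. -/
def footprintL (q m e : ℕ) (ℓ : Fin (m+1)) (S : Set (Fin (m+1) → ℕ)) :
    Set (Fin (m+1) → ℕ) :=
  footprint q m e S ∩ MbarDegL q m e ℓ

/-- `S^{⟨ℓ⟩}`: monomials in `S` involving only `x_0, …, x_ℓ` with all exponents of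
`x_0, …, x_{ℓ-1}` smaller than `q`. -/
def sliceL (q m : ℕ) (ℓ : Fin (m+1)) (S : Set (Fin (m+1) → ℕ)) : Set (Fin (m+1) → ℕ) :=
  {b ∈ S | (∀ i : Fin (m+1), ℓ < i → b i = 0) ∧ ∀ j : Fin (m+1), j < ℓ → b j < q}

/-- The specialization map `σ^{(ℓ)}`, keeping the exponents of `x_0, …, x_{ℓ-1}`. -/
def sigmaL (m ℓ : ℕ) (h : ℓ ≤ m) (b : Fin (m+1) → ℕ) : Fin ℓ → ℕ :=
  fun i => b (Fin.castLE (h.trans (Nat.le_succ m)) i)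

/-- The hypercube `H^{(ℓ)}`. -/
def Hcube (q ℓ : ℕ) : Set (Fin ℓ → ℕ) := {a | ∀ j, a j ≤ q - 1}

/-- `H^{(ℓ)}_d`: elements of the hypercube of degree exactly `d`. -/
def HcubeDeg (q ℓ d : ℕ) : Set (Fin ℓ → ℕ) := {a ∈ Hcube q ℓ | ∑ j, a j = d}

/-- `H^{(ℓ)}_{≤ d}`: elements of the hypercube of degree at most `d`. -/
def HcubeLe (q ℓ d : ℕ) : Set (Fin ℓ → ℕ) := {a ∈ Hcube q ℓ | ∑ j, a j ≤ d}

/-- The shadow `SH^{(ℓ)}(T)` inside the hypercube. -/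
def SHc (q ℓ : ℕ) (T : Set (Fin ℓ → ℕ)) : Set (Fin ℓ → ℕ) :=
  {a ∈ Hcube q ℓ | ∃ t ∈ T, ∀ j, t j ≤ a j}

/-- The footprint `FP^{(ℓ)}(T)` inside the hypercube. -/
def FPc (q ℓ : ℕ) (T : Set (Fin ℓ → ℕ)) : Set (Fin ℓ → ℕ) :=
  Hcube q ℓ \ SHc q ℓ T

/-- `M_d^{(ℓ)}(ρ)`: the first `ρ` elements of `H^{(ℓ)}_{≤ d}` in descending
lexicographic order, i.e. the elements whose descending-lex rank is at most `ρ`. -/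
def MtopC (q ℓ d ρ : ℕ) : Set (Fin ℓ → ℕ) :=
  {a ∈ HcubeLe q ℓ d | ({b ∈ HcubeLe q ℓ d | toLex a ≤ toLex b}).ncard ≤ ρ}

/-- `L_d^{(ℓ)}(ρ')`: the first `ρ'` elements of `H^{(ℓ)}_d` in descending
lexicographic order. -/
def LtopC (q ℓ d ρ' : ℕ) : Set (Fin ℓ → ℕ) :=
  {a ∈ HcubeDeg q ℓ d | ({b ∈ HcubeDeg q ℓ d | toLex a ≤ toLex b}).ncard ≤ ρ'}

/-- The expander map `φ` associated to a set `S` of (projectively reduced) monomials. -/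
noncomputable def phiExp (q m : ℕ) (S : Set (Fin (m+1) → ℕ)) (b : Fin (m+1) → ℕ) :
    Fin (m+1) → ℕ :=
  let pre : Fin (m+1) := ⟨m-1, by omega⟩
  let lst : Fin (m+1) := Fin.last m
  if Function.update (Function.update b lst 0) pre (b pre + b lst) ∉ S ∧ b pre + 1 < q
  then Function.update (Function.update b lst (b lst - 1)) pre (b pre + 1)
  else b

/-- `a` is a leading monomial (w.r.t. lex with `x_0 ≻ ⋯ ≻ x_m`) of the polynomial `F`. -/
def IsLeadMon {m : ℕ} {Fq : Type} [Field Fq] (F : MvPolynomial (Fin (m+1)) Fq)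
    (a : Fin (m+1) → ℕ) : Prop :=
  ∃ s ∈ F.support, ⇑s = a ∧ ∀ t ∈ F.support, toLex (⇑t : Fin (m+1) → ℕ) ≤ toLex ⇑s

/-- The number of `F_q`-points of the projective variety `V(F_1, …, F_r) ⊆ ℙ^m`. -/
noncomputable def projPoints {m r : ℕ} {Fq : Type} [Field Fq]
    (F : Fin r → MvPolynomial (Fin (m+1)) Fq) : ℕ :=
  {p : Projectivization Fq (Fin (m+1) → Fq) | ∀ i, MvPolynomial.eval p.rep (F i) = 0}.ncard

/-- `e_r(d, m)`: maximal number of projective points on `r` linearly independent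
degree-`d` hypersurfaces. -/
noncomputable def er (Fq : Type) [Field Fq] [Fintype Fq] (d m r : ℕ) : ℕ :=
  sSup {n | ∃ F : Fin r → MvPolynomial (Fin (m+1)) Fq,
    LinearIndependent Fq F ∧ (∀ i, (F i).IsHomogeneous d) ∧ n = projPoints F}

/-- `ē_r(d, m)`: as `e_r(d, m)` but with projectively reduced polynomials. -/
noncomputable def ebar (q : ℕ) (Fq : Type) [Field Fq] [Fintype Fq] (d m r : ℕ) : ℕ :=
  sSup {n | ∃ F : Fin r → MvPolynomial (Fin (m+1)) Fq,
    LinearIndependent Fq F ∧ (∀ i, (F i).IsHomogeneous d) ∧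
    (∀ i, ∀ s ∈ (F i).support, ProjReduced q m ⇑s) ∧ n = projPoints F}

/-- `A_r(d, m; e)`: the maximal footprint size over `r`-element subsets of `M̄_d`. -/
noncomputable def Ar (q m d r e : ℕ) : ℕ :=
  sSup {n | ∃ S : Set (Fin (m+1) → ℕ),
    S ⊆ MbarDeg q m d ∧ S.ncard = r ∧ n = (footprint q m e S).ncard}

/-- The first `r` elements of `M̄_d` in descending lexicographic order. -/
def MdTop (q m d r : ℕ) : Set (Fin (m+1) → ℕ) :=
  {a ∈ MbarDeg q m d | ({b ∈ MbarDeg q m d | toLex a ≤ toLex b}).ncard ≤ r}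

/-- `p_j = q^j + ⋯ + q + 1` for `j ≥ 0`, and `p_j = 0` for `j < 0`. -/
def pz (q : ℕ) (j : ℤ) : ℕ :=
  if 0 ≤ j then ∑ i ∈ Finset.range (j.toNat + 1), q ^ i else 0

/-- `⌊q^j⌋ := q^j` if `j ≥ 0` and `0` if `j < 0`. -/
def qfl (q : ℕ) (j : ℤ) : ℕ := if 0 ≤ j then q ^ j.toNat else 0

/-- `IsHr q d m r H` says that `H = H_r(d, m)`, the Heijnen–Pellikaan quantity:
for `r ≥ 1`, `H = Σ α_i q^{m-i}` where `α` is the `r`-th element of `Q^m_{≤ d}` in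
descending lexicographic order; by convention `H_0(d, m) = q^m`. -/
def IsHr (q d m r H : ℕ) : Prop :=
  (r = 0 ∧ H = q ^ m) ∨
  (0 < r ∧ ∃ α ∈ HcubeLe q m d,
    ({β ∈ HcubeLe q m d | toLex α ≤ toLex β}).ncard = r ∧
    H = ∑ k : Fin m, α k * q ^ (m - 1 - (k : ℕ)))

/-- The projective Reed–Muller code `PRM_q(d, m)`, as a subspace of the functions from
`ℙ^m(F_q)` to `F_q`: the image of the degree-`d` homogeneous polynomials under
evaluation at (fixed representatives of) the projective points. -/
noncomputable def PRM (Fq : Type) [Field Fq] [Fintype Fq] (d m : ℕ) :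
    Submodule Fq (Projectivization Fq (Fin (m+1) → Fq) → Fq) :=
  Submodule.map
    (LinearMap.pi (fun p : Projectivization Fq (Fin (m+1) → Fq) =>
      (MvPolynomial.aeval p.rep : MvPolynomial (Fin (m+1)) Fq →ₐ[Fq] Fq).toLinearMap))
    (MvPolynomial.homogeneousSubmodule (Fin (m+1)) Fq d)

/-- The `r`-th generalized Hamming weight of a linear code `C`. -/
noncomputable def genHW (Fq : Type) [Field Fq] {ι : Type} (C : Submodule Fq (ι → Fq))
    (r : ℕ) : ℕ :=
  sInf {w | ∃ D : Submodule Fq (ι → Fq), D ≤ C ∧ Module.finrank Fq ↥D = r ∧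
    w = {i : ι | ∃ c ∈ D, c i ≠ 0}.ncard}

namespace FootprintAux

open MvPolynomial

lemma lex_lt_def {m : ℕ} {a b : Fin (m+1) → ℕ} :
    toLex a < toLex b ↔ ∃ i, (∀ j, j < i → a j = b j) ∧ a i < b i := Iff.rfl

lemma lex_add_lt {m : ℕ} (u : Fin (m+1) → ℕ) {a b : Fin (m+1) → ℕ}
    (h : toLex a < toLex b) : toLex (u + a) < toLex (u + b) := by
  obtain ⟨i, h1, h2⟩ := lex_lt_def.mp h
  refine lex_lt_def.mpr ⟨i, fun j hj => ?_, ?_⟩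
  · show u j + a j = u j + b j
    rw [h1 j hj]
  · exact Nat.add_lt_add_left h2 _

instance lexlt_strict (m : ℕ) :
    IsStrictOrder (Fin (m+1) → ℕ) (fun a b => toLex a < toLex b) where
  irrefl a := lt_irrefl (toLex a)
  trans a b c hab hbc := lt_trans hab hbc

lemma sum_eq_degree {m : ℕ} (d : Fin (m+1) →₀ ℕ) : ∑ j, d j = d.degree := by
  rw [Finsupp.degree]
  exact (Finset.sum_subset (Finset.subset_univ _)
    (fun x _ hx => Finsupp.notMem_support_iff.mp hx)).symm

lemma isHom_support {m : ℕ} {Fq : Type} [CommSemiring Fq]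
    {P : MvPolynomial (Fin (m+1)) Fq} {e : ℕ} (h : P.IsHomogeneous e)
    {d : Fin (m+1) →₀ ℕ} (hd : d ∈ P.support) : ∑ j, d j = e := by
  have h2 := h (MvPolynomial.mem_support_iff.mp hd)
  rw [sum_eq_degree, Finsupp.degree_eq_weight_one]
  exact h2

lemma mono_eval {m : ℕ} {Fq : Type} [CommSemiring Fq] (x : Fin (m+1) → Fq)
    (d : Fin (m+1) →₀ ℕ) :
    MvPolynomial.eval x (MvPolynomial.monomial d (1 : Fq)) = ∏ i, x i ^ d i := by
  rw [MvPolynomial.eval_monomial, one_mul, Finsupp.prod_pow]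

/-- The linear polynomial associated to a linear functional. -/
noncomputable def Lpoly {m : ℕ} {Fq : Type} [CommSemiring Fq]
    (φ : (Fin (m+1) → Fq) →ₗ[Fq] Fq) : MvPolynomial (Fin (m+1)) Fq :=
  ∑ i, MvPolynomial.C (φ (Pi.single i 1)) * MvPolynomial.X i

lemma Lpoly_hom {m : ℕ} {Fq : Type} [CommSemiring Fq]
    (φ : (Fin (m+1) → Fq) →ₗ[Fq] Fq) : (Lpoly φ).IsHomogeneous 1 :=
  MvPolynomial.IsHomogeneous.sum _ _ _ fun i _ => MvPolynomial.isHomogeneous_C_mul_X _ i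

lemma Lpoly_eval {m : ℕ} {Fq : Type} [CommSemiring Fq]
    (φ : (Fin (m+1) → Fq) →ₗ[Fq] Fq) (x : Fin (m+1) → Fq) :
    MvPolynomial.eval x (Lpoly φ) = φ x := by
  have h1 : x = ∑ i, x i • (Pi.single i 1 : Fin (m+1) → Fq) := by
    funext j
    rw [Finset.sum_apply]
    simp [Pi.single_apply, Finset.sum_ite_eq]
  conv_rhs => rw [h1]
  rw [map_sum, Lpoly, map_sum]
  refine Finset.sum_congr rfl fun i _ => ?_
  rw [map_mul, eval_C, eval_X, map_smul, smul_eq_mul, mul_comm]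

end FootprintAux

/-- Projective `F_q`-footprint bound. -/
theorem statement_0 (q m r : ℕ) (hq : IsPrimePow q) (hm : 0 < m)
    (Fq : Type) [Field Fq] [Fintype Fq] (hcard : Fintype.card Fq = q)
    (F : Fin r → MvPolynomial (Fin (m+1)) Fq)
    (hF0 : ∀ i, F i ≠ 0)
    (hFhom : ∀ i, ∃ d, (F i).IsHomogeneous d)
    (hFred : ∀ i, ∀ s ∈ (F i).support, ProjReduced q m ⇑s)
    (S : Set (Fin (m+1) → ℕ))
    (hS : S = {a | ∃ i, IsLeadMon (F i) a}) :
    ∃ e₀ : ℕ, ∀ e ≥ e₀, projPoints F ≤ (footprint q m e S).ncard := by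
  classical
  open FootprintAux MvPolynomial in
  set P := Projectivization Fq (Fin (m+1) → Fq) with hP
  set Z : Set P := {p | ∀ i, MvPolynomial.eval p.rep (F i) = 0} with hZ
  haveI : Finite P := Quotient.finite _
  haveI : Fintype ↥Z := Fintype.ofFinite _
  have hproj : projPoints F = Fintype.card ↥Z := by
    rw [projPoints, ← Nat.card_coe_set_eq, Nat.card_eq_fintype_card]
  set n := Fintype.card ↥Z with hn
  have hq2 : 2 ≤ q := hq.two_le
  refine ⟨n, fun e he => ?_⟩
  set v : (Fin (m+1) → ℕ) → (↥Z → Fq) :=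
    fun c z => ∏ i, (↑z : P).rep i ^ c i with hv
  set W : Submodule Fq (↥Z → Fq) := Submodule.span Fq (v '' footprint q m e S) with hW
  have hsfin : ({c : Fin (m+1) → ℕ | ∑ i, c i = e}).Finite := by
    apply Set.Finite.subset (Set.Finite.pi fun _ : Fin (m+1) => Set.finite_Iic e)
    intro c hc
    intro i _
    exact Finset.single_le_sum (f := c) (fun _ _ => Nat.zero_le _) (Finset.mem_univ i)
      |>.trans_eq hc
  -- Claim C: evaluation vectors of degree-e monomials lie in W
  have claimC : ∀ c : Fin (m+1) → ℕ, (∑ i, c i) = e → v c ∈ W := by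
    intro c hc
    refine Set.WellFoundedOn.induction (r := fun a b => toLex a < toLex b)
      (P := fun c => v c ∈ W) (hsfin.wellFoundedOn)
      (show c ∈ {c : Fin (m+1) → ℕ | ∑ i, c i = e} from hc) ?_
    intro y hy IH
    simp only [Set.mem_setOf_eq] at hy IH
    by_cases hred : ProjReduced q m y
    · by_cases hfp : y ∈ footprint q m e S
      · exact Submodule.subset_span ⟨y, hfp, rfl⟩
      · -- y is reduced of degree e but not in the footprint: it is in the shadow
        have hyM : y ∈ MbarDeg q m e := ⟨hred, hy⟩
        have hsh : y ∈ shadow q m e S := by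
          by_contra h
          exact hfp ⟨hyM, h⟩
        obtain ⟨-, a, haS, hale⟩ := hsh
        rw [hS] at haS
        obtain ⟨i, s₀, hs₀supp, hs₀a, hmax⟩ := haS
        obtain ⟨dd, hdd⟩ := hFhom i
        have hlc : MvPolynomial.coeff s₀ (F i) ≠ 0 := MvPolynomial.mem_support_iff.mp hs₀supp
        set lc := MvPolynomial.coeff s₀ (F i) with hlcdef
        set u : Fin (m+1) →₀ ℕ := Finsupp.equivFunOnFinite.symm (y - a) with hu
        set cy : Fin (m+1) →₀ ℕ := Finsupp.equivFunOnFinite.symm y with hcy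
        have hcyc : ⇑cy = y := rfl
        have hucoe : ⇑u = y - a := rfl
        have hus : u + s₀ = cy := by
          ext j
          have h1 : a j ≤ y j := hale j
          have : u j + s₀ j = y j := by
            show (y j - a j) + s₀ j = y j
            rw [show s₀ j = a j from congrFun hs₀a j]
            omega
          simpa [hcyc] using this
        have hdega : ∑ j, a j = dd := by
          rw [← hs₀a]
          exact FootprintAux.isHom_support hdd hs₀supp
        set G : MvPolynomial (Fin (m+1)) Fq :=
          MvPolynomial.monomial cy 1 -
            MvPolynomial.C lc⁻¹ * (MvPolynomial.monomial u 1 * F i) with hG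
        -- support facts
        have hsupp : ∀ d ∈ G.support, (∑ j, d j) = e ∧ toLex (⇑d) < toLex y := by
          intro d hd
          have hcd : MvPolynomial.coeff d G ≠ 0 := MvPolynomial.mem_support_iff.mp hd
          rw [hG, MvPolynomial.coeff_sub, MvPolynomial.coeff_C_mul,
            MvPolynomial.coeff_monomial_mul', MvPolynomial.coeff_monomial] at hcd
          by_cases hdc : d = cy
          · exfalso
            apply hcd
            have hucy : u ≤ d := by
              rw [hdc, Finsupp.le_def]
              intro j
              show y j - a j ≤ y j
              omega
            have hds : d - u = s₀ := by
              ext j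
              have h1 : a j ≤ y j := hale j
              have h2 : s₀ j = a j := congrFun hs₀a j
              rw [hdc, Finsupp.tsub_apply]
              show y j - (y j - a j) = s₀ j
              omega
            rw [if_pos hdc.symm, if_pos hucy, hds, one_mul, ← hlcdef,
              inv_mul_cancel₀ hlc, sub_self]
          · rw [if_neg (Ne.symm hdc), zero_sub, neg_ne_zero] at hcd
            have h0 : u ≤ d := by
              by_contra h
              rw [if_neg h, mul_zero] at hcd
              exact hcd rfl
            rw [if_pos h0, one_mul] at hcd
            have hcoef : MvPolynomial.coeff (d - u) (F i) ≠ 0 :=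
              fun h => hcd (by rw [h, mul_zero])
            set t := d - u with ht
            have htsupp : t ∈ (F i).support := MvPolynomial.mem_support_iff.mpr hcoef
            have hdut : u + t = d := add_tsub_cancel_of_le h0
            have hts : t ≠ s₀ := by
              intro h
              apply hdc
              rw [← hdut, h, hus]
            constructor
            · -- degree
              have h1 : ∑ j, t j = dd := FootprintAux.isHom_support hdd htsupp
              have h2 : ∑ j, d j = ∑ j, u j + ∑ j, t j := by
                rw [← hdut]
                simp [Finset.sum_add_distrib]
              have h3 : ∑ j, u j + ∑ j, a j = ∑ j, y j :=
                Finset.sum_add_distrib.symm.trans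
                  (Finset.sum_congr rfl fun j _ => by
                    have := hale j; show (y j - a j) + a j = y j; omega)
              omega
            · -- lex
              have hlt : toLex (⇑t) < toLex (⇑s₀) := by
                refine lt_of_le_of_ne (hmax t htsupp) ?_
                intro h
                exact hts (DFunLike.coe_injective (by exact_mod_cast h))
              have := FootprintAux.lex_add_lt (⇑u) hlt
              have hsum1 : (⇑u + ⇑t : Fin (m+1) → ℕ) = ⇑d := by
                rw [← Finsupp.coe_add, hdut]
              have hsum2 : (⇑u + ⇑s₀ : Fin (m+1) → ℕ) = y := by
                rw [← Finsupp.coe_add, hus]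
                exact hcyc
              rwa [hsum1, hsum2] at this
        -- evaluation fact
        have heval : ∀ z : ↥Z, MvPolynomial.eval (↑z : P).rep G = v y z := by
          intro z
          have hz : MvPolynomial.eval (↑z : P).rep (F i) = 0 := z.2 i
          rw [hG, map_sub, map_mul, map_mul, hz, mul_zero, mul_zero, sub_zero,
            FootprintAux.mono_eval]
          rfl
        have hrw : v y = ∑ d ∈ G.support, MvPolynomial.coeff d G • v ⇑d := by
          funext z
          rw [Finset.sum_apply, ← heval z, MvPolynomial.eval_eq']
          exact Finset.sum_congr rfl fun d _ => rfl
        rw [hrw]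
        exact Submodule.sum_mem _ fun d hd =>
          Submodule.smul_mem _ _ (IH ⇑d (hsupp d hd).1 (hsupp d hd).2)
    · -- y not reduced: rewrite using field relations
      rw [ProjReduced] at hred
      push_neg at hred
      obtain ⟨j, ⟨l, hjl, hl0⟩, hqj⟩ := hred
      have hyj : q ≤ y j := by omega
      have hjl' : j ≠ l := ne_of_lt hjl
      set y' : Fin (m+1) → ℕ :=
        fun i => if i = j then y j - (q-1) else if i = l then y l + (q-1) else y i with hy'
      have hy'j : y' j = y j - (q-1) := by simp [hy']
      have hy'l : y' l = y l + (q-1) := by simp [hy', hjl'.symm]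
      have hy'o : ∀ i, i ≠ j → i ≠ l → y' i = y i := by
        intro i h1 h2; simp [hy', h1, h2]
      have hsum' : ∑ i, y' i = e := by
        have key : ∀ i : Fin (m+1),
            y' i + (if i = j then q-1 else 0) = y i + (if i = l then q-1 else 0) := by
          intro i
          by_cases h1 : i = j
          · subst h1
            rw [hy'j, if_pos rfl, if_neg hjl']
            omega
          · by_cases h2 : i = l
            · subst h2
              rw [hy'l, if_neg h1, if_pos rfl]
              omega
            · rw [hy'o i h1 h2, if_neg h1, if_neg h2]
        have hsum := Finset.sum_congr rfl (fun i (_ : i ∈ Finset.univ) => key i)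
        rw [Finset.sum_add_distrib, Finset.sum_add_distrib,
          Finset.sum_ite_eq' Finset.univ j (fun _ => q-1),
          Finset.sum_ite_eq' Finset.univ l (fun _ => q-1)] at hsum
        simp only [Finset.mem_univ, if_pos] at hsum
        omega
      have hlex : toLex y' < toLex y := by
        refine FootprintAux.lex_lt_def.mpr ⟨j, fun j' hj' => ?_, ?_⟩
        · exact hy'o j' (ne_of_lt hj') (ne_of_lt (lt_trans hj' hjl))
        · rw [hy'j]; omega
      have hveq : v y' = v y := by
        funext z
        show ∏ i, (↑z : P).rep i ^ y' i = ∏ i, (↑z : P).rep i ^ y i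
        set x := (↑z : P).rep with hx
        by_cases hxj : x j = 0
        · rw [Finset.prod_eq_zero (Finset.mem_univ j)
            (by rw [hxj]; exact zero_pow (by omega)),
            Finset.prod_eq_zero (Finset.mem_univ j)
            (by rw [hxj]; exact zero_pow (by omega))]
        · by_cases hxl : x l = 0
          · rw [Finset.prod_eq_zero (Finset.mem_univ l)
              (by rw [hxl]; exact zero_pow (by rw [hy'l]; omega)),
              Finset.prod_eq_zero (Finset.mem_univ l)
              (by rw [hxl]; exact zero_pow (by omega))]
          · have hx1j : x j ^ (q-1) = 1 := by
              rw [← hcard]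
              exact FiniteField.pow_card_sub_one_eq_one _ hxj
            have hx1l : x l ^ (q-1) = 1 := by
              rw [← hcard]
              exact FiniteField.pow_card_sub_one_eq_one _ hxl
            refine Finset.prod_congr rfl fun i _ => ?_
            by_cases h1 : i = j
            · subst h1
              rw [hy'j]
              conv_rhs => rw [show y i = (y i - (q-1)) + (q-1) by omega]
              rw [pow_add, hx1j, mul_one]
            · by_cases h2 : i = l
              · subst h2
                rw [hy'l, pow_add, hx1l, mul_one]
              · rw [hy'o i h1 h2]
      rw [← hveq]
      exact IH y' hsum' hlex
  -- Claim H: evaluation vectors of homogeneous degree-e polynomials lie in W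
  have claimH : ∀ G : MvPolynomial (Fin (m+1)) Fq, G.IsHomogeneous e →
      (fun z : ↥Z => MvPolynomial.eval (↑z : P).rep G) ∈ W := by
    intro G hG
    have hrw : (fun z : ↥Z => MvPolynomial.eval (↑z : P).rep G)
        = ∑ d ∈ G.support, MvPolynomial.coeff d G • v ⇑d := by
      funext z
      rw [Finset.sum_apply, MvPolynomial.eval_eq']
      exact Finset.sum_congr rfl fun d _ => rfl
    rw [hrw]
    exact Submodule.sum_mem _ fun d hd =>
      Submodule.smul_mem _ _ (claimC ⇑d (FootprintAux.isHom_support hG hd))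
  -- Interpolation: W = ⊤
  have hWtop : ∀ f : ↥Z → Fq, f ∈ W := by
    have hw : ∀ z₀ : ↥Z, ∃ w ∈ W, w z₀ ≠ 0 ∧ ∀ z, z ≠ z₀ → w z = 0 := by
      intro z₀
      have hsep : ∀ z : ↥Z, z ≠ z₀ → ∃ φ : Module.Dual Fq (Fin (m+1) → Fq),
          φ ((↑z : P).rep) = 0 ∧ φ ((↑z₀ : P).rep) ≠ 0 := by
        intro z hz
        have hrep0 : (↑z₀ : P).rep ∉ Submodule.span Fq {(↑z : P).rep} := by
          intro hmem
          rw [Submodule.mem_span_singleton] at hmem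
          obtain ⟨c, hc⟩ := hmem
          have : (↑z₀ : P) = (↑z : P) := by
            rw [← Projectivization.mk_rep (↑z₀ : P), ← Projectivization.mk_rep (↑z : P)]
            exact (Projectivization.mk_eq_mk_iff' Fq _ _
              (Projectivization.rep_nonzero _) (Projectivization.rep_nonzero _)).mpr ⟨c, hc⟩
          exact hz (Subtype.ext this.symm)
        obtain ⟨φ, hφ0, hφbot⟩ :=
          Submodule.exists_dual_map_eq_bot_of_notMem hrep0 inferInstance
        refine ⟨φ, ?_, hφ0⟩
        have hmem : φ ((↑z : P).rep) ∈ (Submodule.span Fq {(↑z : P).rep}).map φ :=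
          ⟨_, Submodule.mem_span_singleton_self _, rfl⟩
        rw [hφbot] at hmem
        exact (Submodule.mem_bot Fq).mp hmem
      choose φ hφ1 hφ2 using hsep
      set ψ : ↥Z → Module.Dual Fq (Fin (m+1) → Fq) :=
        fun z => if h : z = z₀ then 0 else φ z h with hψ
      have hψ1 : ∀ z, z ≠ z₀ → ψ z ((↑z : P).rep) = 0 := by
        intro z hz; rw [hψ]; simp only [dif_neg hz]; exact hφ1 z hz
      have hψ2 : ∀ z, z ≠ z₀ → ψ z ((↑z₀ : P).rep) ≠ 0 := by
        intro z hz; rw [hψ]; simp only [dif_neg hz]; exact hφ2 z hz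
      obtain ⟨i₀, hi₀⟩ : ∃ i₀, (↑z₀ : P).rep i₀ ≠ 0 := by
        by_contra h
        push_neg at h
        exact Projectivization.rep_nonzero (↑z₀ : P) (funext h)
      set G : MvPolynomial (Fin (m+1)) Fq :=
        (∏ z ∈ Finset.univ.erase z₀, FootprintAux.Lpoly (ψ z)) *
          (MvPolynomial.X i₀) ^ (e - (n-1)) with hG
      have hGhom : G.IsHomogeneous e := by
        have h1 : (∏ z ∈ Finset.univ.erase z₀, FootprintAux.Lpoly (ψ z)).IsHomogeneous
            (∑ _z ∈ Finset.univ.erase z₀, 1) :=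
          MvPolynomial.IsHomogeneous.prod _ _ _ fun z _ => FootprintAux.Lpoly_hom _
        have h2 : ((MvPolynomial.X i₀ : MvPolynomial (Fin (m+1)) Fq)
            ^ (e - (n-1))).IsHomogeneous (1 * (e - (n-1))) :=
          (MvPolynomial.isHomogeneous_X _ _).pow _
        have h3 := h1.mul h2
        have hcarde : (∑ _z ∈ Finset.univ.erase z₀, 1) = n - 1 := by
          rw [Finset.sum_const, smul_eq_mul, mul_one,
            Finset.card_erase_of_mem (Finset.mem_univ _), Finset.card_univ]
        have h4 : (∑ _z ∈ Finset.univ.erase z₀, 1) + 1 * (e - (n-1)) = e := by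
          rw [hcarde, one_mul]
          have hn1 : 0 < n := Fintype.card_pos_iff.mpr ⟨z₀⟩
          omega
        rw [← h4]
        exact h3
      have hGz : ∀ z : ↥Z, z ≠ z₀ → MvPolynomial.eval (↑z : P).rep G = 0 := by
        intro z hz
        rw [hG, map_mul, map_prod]
        rw [Finset.prod_eq_zero (Finset.mem_erase.mpr ⟨hz, Finset.mem_univ z⟩)
          (by rw [FootprintAux.Lpoly_eval]; exact hψ1 z hz), zero_mul]
      have hGz₀ : MvPolynomial.eval (↑z₀ : P).rep G ≠ 0 := by
        rw [hG, map_mul, map_prod, map_pow]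
        apply mul_ne_zero
        · rw [Finset.prod_ne_zero_iff]
          intro z hzmem
          have hz : z ≠ z₀ := (Finset.mem_erase.mp hzmem).1
          rw [FootprintAux.Lpoly_eval]
          exact hψ2 z hz
        · refine pow_ne_zero _ ?_
          rw [MvPolynomial.eval_X]
          exact hi₀
      exact ⟨_, claimH G hGhom, hGz₀, fun z hz => hGz z hz⟩
    choose w hwW hw0 hwz using hw
    intro f
    have hrw : f = ∑ z₀ : ↥Z, (f z₀ * (w z₀ z₀)⁻¹) • w z₀ := by
      funext z'
      rw [Finset.sum_apply, Finset.sum_eq_single z']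
      · rw [Pi.smul_apply, smul_eq_mul, mul_assoc, inv_mul_cancel₀ (hw0 z'), mul_one]
      · intro b _ hb
        rw [Pi.smul_apply, smul_eq_mul, hwz b z' (Ne.symm hb), mul_zero]
      · intro h
        exact absurd (Finset.mem_univ z') h
    rw [hrw]
    exact Submodule.sum_mem _ fun z₀ _ => Submodule.smul_mem _ _ (hwW z₀)
  -- Conclusion
  have hfpfin : (footprint q m e S).Finite :=
    Set.Finite.subset hsfin fun d hd => hd.1.2
  have himfin : (v '' footprint q m e S).Finite := hfpfin.image v
  haveI : Fintype ↥(v '' footprint q m e S) := himfin.fintype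
  have hWt : W = ⊤ := by
    rw [Submodule.eq_top_iff']
    exact hWtop
  have h1 : n ≤ (v '' footprint q m e S).toFinset.card := by
    have h2 := finrank_span_le_card (R := Fq) (v '' footprint q m e S)
    rw [← hW, hWt, finrank_top] at h2
    rwa [Module.finrank_pi Fq] at h2
  calc projPoints F = n := hproj
    _ ≤ (v '' footprint q m e S).toFinset.card := h1
    _ = (v '' footprint q m e S).ncard := (Set.ncard_eq_toFinset_card' _).symm
    _ ≤ (footprint q m e S).ncard := Set.ncard_image_le hfpfin
end

section
/- Let q be a prime power and ℓ, d, ρ integers with ℓ ≥ 1, 1 ≤ d ≤ ℓ(q−1), and 0 ≤ ρ ≤ |H^{(ℓ)}_{≤ d−1}|. Then there exists a nonnegative integer ρ' such that SH_d^{(ℓ)}(M_{d−1}^{(ℓ)}(ρ)) = L_d^{(ℓ)}(ρ'). Moreover, if ρ is positive, then ρ' can be taken positive. -/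
open scoped Classical

lemma hcube_finite (q ℓ : ℕ) : (Hcube q ℓ).Finite := by
  have hsub : Hcube q ℓ ⊆ Set.pi Set.univ (fun _ : Fin ℓ => Set.Iic (q-1)) := by
    intro a ha j _; exact ha j
  exact (Set.Finite.pi (fun _ => Set.finite_Iic _)).subset hsub

lemma hcubeLe_finite (q ℓ d : ℕ) : (HcubeLe q ℓ d).Finite :=
  (hcube_finite q ℓ).subset (fun a ha => ha.1)

lemma hcubeDeg_finite (q ℓ d : ℕ) : (HcubeDeg q ℓ d).Finite :=
  (hcube_finite q ℓ).subset (fun a ha => ha.1)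

lemma fill_lemma (q ℓ : ℕ) : ∀ n (t : Fin ℓ → ℕ), t ∈ Hcube q ℓ →
    ∑ j, t j + n ≤ ℓ * (q-1) →
    ∃ a, a ∈ Hcube q ℓ ∧ (∀ j, t j ≤ a j) ∧ ∑ j, a j = ∑ j, t j + n := by
  intro n
  induction n with
  | zero => exact fun t ht _ => ⟨t, ht, fun j => le_rfl, by simp⟩
  | succ n ih =>
    intro t ht hsum
    have hex : ∃ j, t j < q - 1 := by
      by_contra hc
      push_neg at hc
      have heq : ∀ j, t j = q - 1 := fun j => le_antisymm (ht j) (hc j)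
      have hs : ∑ j, t j = ℓ * (q-1) := by
        rw [Finset.sum_congr rfl (fun j _ => heq j)]
        simp [Finset.sum_const, Finset.card_univ, mul_comm]
      omega
    obtain ⟨j, hj⟩ := hex
    have hsum' : ∑ i, Function.update t j (t j + 1) i = ∑ i, t i + 1 := by
      rw [Finset.sum_update_of_mem (Finset.mem_univ j)]
      have h2 : ∑ i, t i = ∑ i ∈ Finset.univ \ {j}, t i + t j := by
        rw [Finset.sum_eq_sum_sdiff_singleton_add (Finset.mem_univ j)]
      omega
    have ht' : Function.update t j (t j + 1) ∈ Hcube q ℓ := by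
      intro i
      rcases eq_or_ne i j with rfl | hne
      · rw [Function.update_self]; omega
      · rw [Function.update_of_ne hne]; exact ht i
    obtain ⟨a, haH, hta, has⟩ := ih (Function.update t j (t j + 1)) ht' (by omega)
    refine ⟨a, haH, fun i => ?_, by omega⟩
    refine le_trans ?_ (hta i)
    rcases eq_or_ne i j with rfl | hne
    · rw [Function.update_self]; omega
    · rw [Function.update_of_ne hne]

lemma core_lemma (q ℓ e : ℕ) (t c a : Fin ℓ → ℕ) (ha : a ∈ Hcube q ℓ)
    (htc : ∀ j, t j ≤ c j) (hte : ∑ j, t j ≤ e) (hca : toLex c < toLex a) :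
    ∃ t', (∀ j, t' j ≤ a j) ∧ ∑ j, t' j ≤ e ∧ toLex t ≤ toLex t' := by
  obtain ⟨k, hk1, hk2⟩ := hca
  have htk : t k < a k := lt_of_le_of_lt (htc k) hk2
  set P := ∑ j, (if j ≤ k then t j else 0) with hP
  have hPle : P ≤ ∑ j, t j := by
    refine Finset.sum_le_sum (fun j _ => ?_)
    split <;> omega
  set s := min (a k - t k) (e - P) with hs
  set t' : Fin ℓ → ℕ :=
    fun j => (if j ≤ k then t j else 0) + (if j = k then s else 0) with ht'
  have hsum' : ∑ j, t' j = P + s := by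
    rw [ht', Finset.sum_add_distrib, hP]
    congr 1
    simp [Finset.sum_ite_eq']
  have hle : ∀ j, t' j ≤ a j := by
    intro j
    rcases lt_trichotomy j k with h | rfl | h
    · have h1 : t' j = t j := by
        rw [ht']; simp only [if_pos h.le, if_neg h.ne, add_zero]
      have h2 : c j = a j := hk1 j h
      rw [h1, ← h2]; exact htc j
    · have : t' j = t j + s := by rw [ht']; simp
      rw [this]
      have := min_le_left (a j - t j) (e - P)
      omega
    · have : t' j = 0 := by
        rw [ht']; simp only [if_neg (not_le.mpr h), if_neg h.ne', add_zero]
      omega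
  have hsle : ∑ j, t' j ≤ e := by
    have h1 := min_le_right (a k - t k) (e - P)
    omega
  refine ⟨t', hle, hsle, ?_⟩
  rcases Nat.eq_zero_or_pos s with hs0 | hs0
  · have heP : e - P = 0 := by
      rcases Nat.min_eq_zero_iff.mp (hs ▸ hs0) with h | h
      · omega
      · exact h
    have hPsum : P = ∑ j, t j := by omega
    have hsplit : ∑ j, t j = P + ∑ j, (if j ≤ k then 0 else t j) := by
      rw [hP, ← Finset.sum_add_distrib]
      refine Finset.sum_congr rfl (fun j _ => ?_)
      split <;> simp
    have htail : ∀ j, ¬ j ≤ k → t j = 0 := by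
      intro j hjk
      have hz : ∑ j, (if j ≤ k then 0 else t j) = 0 := by omega
      have := (Finset.sum_eq_zero_iff).mp hz j (Finset.mem_univ j)
      rwa [if_neg hjk] at this
    have : t' = t := by
      funext j
      rw [ht']
      by_cases hjk : j ≤ k
      · simp only [if_pos hjk, hs0]
        split <;> omega
      · simp only [if_neg hjk, if_neg (fun h : j = k => hjk (le_of_eq h)), htail j hjk]
    rw [this]
  · have hk' : t' k = t k + s := by rw [ht']; simp
    refine le_of_lt ⟨k, fun j hj => ?_, ?_⟩
    · show t j = t' j
      rw [ht']; simp only [if_pos (le_of_lt hj), if_neg (ne_of_lt hj), add_zero]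
    · show t k < t' k
      omega

lemma lex_le_total {ℓ : ℕ} (x y : Fin ℓ → ℕ) :
    toLex x ≤ toLex y ∨ toLex y ≤ toLex x := by
  have h := (Pi.isTrichotomous_lex (r := fun a b : Fin ℓ => a < b)
    (s := @fun _ => fun a b : ℕ => a < b) wellFounded_lt).1 x y
  by_cases h1 : toLex x < toLex y
  · exact Or.inl (le_of_lt h1)
  by_cases h2 : toLex y < toLex x
  · exact Or.inr (le_of_lt h2)
  exact Or.inl (le_of_eq (congrArg toLex (h h1 h2)))

/-- the shadow in degree `d` of an initial lex segment of
`H^{(ℓ)}_{≤ d-1}` is an initial lex segment of `H^{(ℓ)}_d`. -/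
theorem statement_1 (q ℓ d ρ : ℕ) (hq : IsPrimePow q) (hℓ : 1 ≤ ℓ)
    (hd1 : 1 ≤ d) (hd2 : d ≤ ℓ * (q - 1)) (hρ : ρ ≤ (HcubeLe q ℓ (d-1)).ncard) :
    ∃ ρ' : ℕ, SHc q ℓ (MtopC q ℓ (d-1) ρ) ∩ HcubeDeg q ℓ d = LtopC q ℓ d ρ' ∧
      (0 < ρ → 0 < ρ') := by
  classical
  set U := SHc q ℓ (MtopC q ℓ (d-1) ρ) ∩ HcubeDeg q ℓ d with hU
  have hUfin : U.Finite := (hcubeDeg_finite q ℓ d).subset Set.inter_subset_right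
  have hclosed : ∀ c ∈ U, ∀ a ∈ HcubeDeg q ℓ d, toLex c ≤ toLex a → a ∈ U := by
    intro c hc a haD hle
    rcases eq_or_lt_of_le hle with heq | hlt
    · exact (toLex.injective heq) ▸ hc
    · obtain ⟨⟨hcH, t, htM, htc⟩, hcD⟩ := hc
      obtain ⟨t', ht'a, ht'e, htt'⟩ :=
        core_lemma q ℓ (d-1) t c a haD.1 htc htM.1.2 hlt
      refine ⟨⟨haD.1, t', ⟨⟨fun j => le_trans (ht'a j) (haD.1 j), ht'e⟩, ?_⟩, ht'a⟩, haD⟩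
      refine le_trans (Set.ncard_le_ncard ?_
        ((hcubeLe_finite q ℓ (d-1)).subset (fun b hb => hb.1))) htM.2
      intro b hb
      exact ⟨hb.1, le_trans htt' hb.2⟩
  refine ⟨U.ncard, ?_, ?_⟩
  · ext a
    constructor
    · intro ha
      refine ⟨ha.2, ?_⟩
      refine Set.ncard_le_ncard ?_ hUfin
      intro b hb
      exact hclosed a ha b hb.1 hb.2
    · intro ha
      by_contra hnot
      have hsub : insert a U ⊆ {b ∈ HcubeDeg q ℓ d | toLex a ≤ toLex b} := by
        intro b hb
        rcases hb with rfl | hb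
        · exact ⟨ha.1, le_rfl⟩
        · refine ⟨hb.2, ?_⟩
          rcases lex_le_total b a with h | h
          · exact absurd (hclosed b hb a ha.1 h) hnot
          · exact h
      have hfin2 : {b ∈ HcubeDeg q ℓ d | toLex a ≤ toLex b}.Finite :=
        (hcubeDeg_finite q ℓ d).subset (fun b hb => hb.1)
      have h1 := Set.ncard_le_ncard hsub hfin2
      rw [Set.ncard_insert_of_notMem hnot hUfin] at h1
      have h2 := ha.2
      omega
  · intro hρ0
    rw [Set.ncard_pos hUfin]
    have hSfin : (HcubeLe q ℓ (d-1)).Finite := hcubeLe_finite q ℓ (d-1)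
    have hSne : (HcubeLe q ℓ (d-1)).Nonempty :=
      ⟨fun _ => 0, fun j => Nat.zero_le _, by simp⟩
    obtain ⟨t, htS, htmax⟩ :=
      Set.Finite.exists_maximalFor (toLex : (Fin ℓ → ℕ) → Lex (Fin ℓ → ℕ))
        (HcubeLe q ℓ (d-1)) hSfin hSne
    have hmax : ∀ b ∈ HcubeLe q ℓ (d-1), toLex b ≤ toLex t := by
      intro b hb
      rcases lex_le_total b t with h | h
      · exact h
      · exact htmax hb h
    have htM : t ∈ MtopC q ℓ (d-1) ρ := by
      refine ⟨htS, ?_⟩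
      have heq : {b ∈ HcubeLe q ℓ (d-1) | toLex t ≤ toLex b} = {t} := by
        ext b
        constructor
        · rintro ⟨hb1, hb2⟩
          exact toLex.injective (le_antisymm (hmax b hb1) hb2)
        · rintro rfl
          exact ⟨htS, le_rfl⟩
      rw [heq, Set.ncard_singleton]
      omega
    obtain ⟨a, haH, hta, has⟩ := fill_lemma q ℓ (d - ∑ j, t j) t htS.1 (by
      have := htS.2; omega)
    refine ⟨a, ⟨haH, t, htM, hta⟩, haH, ?_⟩
    have := htS.2
    omega
end

section
/- Let q be a prime power, m a positive integer, and ℓ, d, e nonnegative integers such that ℓ ≤ m and e ≥ d + m(q−1). Suppose μ ∈ M̄_d is a monomial involving only the variables x_0, ..., x_ℓ, and ν ∈ M̄_e^{(ℓ)}. Then μ divides ν if and only if σ^{(ℓ)}(μ) divides σ^{(ℓ)}(ν). -/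
open scoped Classical

/-- for `e ≥ d + m(q-1)`, divisibility of `ν ∈ M̄_e^{(ℓ)}` by
`μ ∈ M̄_d ∩ F_q[x_0, …, x_ℓ]` is equivalent to divisibility of the specializations. -/
theorem statement_3 (q m ℓ d e : ℕ) (hq : IsPrimePow q) (hm : 0 < m) (hℓ : ℓ ≤ m)
    (he : d + m * (q - 1) ≤ e)
    (μ ν : Fin (m+1) → ℕ) (hμ : μ ∈ MbarDeg q m d)
    (hμℓ : ∀ i : Fin (m+1), ℓ < (i : ℕ) → μ i = 0)
    (hν : ν ∈ MbarDegL q m e ⟨ℓ, by omega⟩) :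
    (∀ i, μ i ≤ ν i) ↔ ∀ i : Fin ℓ, sigmaL m ℓ hℓ μ i ≤ sigmaL m ℓ hℓ ν i := by
  set L : Fin (m+1) := ⟨ℓ, by omega⟩ with hL
  obtain ⟨⟨hνred, hνsum⟩, hνzero, hνL⟩ := hν
  obtain ⟨hμred, hμsum⟩ := hμ
  constructor
  · intro h i
    exact h _
  · intro h i
    rcases lt_trichotomy (i : ℕ) ℓ with hi | hi | hi
    · have := h ⟨(i : ℕ), hi⟩
      have hcast : (Fin.castLE (hℓ.trans (Nat.le_succ m)) ⟨(i : ℕ), hi⟩ : Fin (m+1)) = i :=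
        Fin.ext rfl
      simpa [sigmaL, hcast] using this
    · -- i = L : degree argument
      have hiL : i = L := Fin.ext hi
      subst hiL
      -- μ L ≤ d
      have hμLd : μ L ≤ d := by
        rw [← hμsum]
        exact Finset.single_le_sum (fun j _ => Nat.zero_le _) (Finset.mem_univ L)
      -- sum over the rest of ν is ≤ m * (q-1)
      have hsplit : ν L + ∑ j ∈ Finset.univ.erase L, ν j = e := by
        rw [Finset.add_sum_erase _ _ (Finset.mem_univ L)]
        exact hνsum
      have hrest : ∑ j ∈ Finset.univ.erase L, ν j ≤ m * (q - 1) := by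
        have hcard : (Finset.univ.erase L).card = m := by
          simp [Finset.card_erase_of_mem, Fintype.card_fin]
        calc ∑ j ∈ Finset.univ.erase L, ν j
            ≤ ∑ _j ∈ Finset.univ.erase L, (q - 1) := by
              apply Finset.sum_le_sum
              intro j hj
              have hjL : j ≠ L := (Finset.mem_erase.mp hj).1
              rcases lt_or_gt_of_ne hjL with hlt | hgt
              · -- j < L : reduced bound, since ν L > 0
                have hℓpos : (L : ℕ) ≠ 0 := by
                  have : (j : ℕ) < (L : ℕ) := hlt
                  omega
                have hνLpos : 0 < ν L := hνL.resolve_left hℓpos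
                exact hνred j ⟨L, hlt, hνLpos⟩
              · -- L < j : ν j = 0
                have : ν j = 0 := hνzero j hgt
                omega
          _ = m * (q - 1) := by rw [Finset.sum_const, hcard, smul_eq_mul]
      omega
    · -- ℓ < i : μ i = 0
      have : μ i = 0 := hμℓ i hi
      omega
end

section
/- Let q be a prime power, m a positive integer, and S a finite subset of M̄. Then there exists a nonnegative integer e_0 such that Δ_e^{(m)}(S) ⊆ Δ_e^{(m)}(φ(S)) for all e ≥ e_0. -/
open scoped Classical

lemma phi_ge_of_ne_last (q m : ℕ) (hm : 0 < m) (S : Set (Fin (m+1) → ℕ))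
    (a : Fin (m+1) → ℕ) (i : Fin (m+1)) (hi : i ≠ Fin.last m) :
    a i ≤ phiExp q m S a i := by
  unfold phiExp
  split
  · rcases eq_or_ne i ⟨m-1, by omega⟩ with rfl | hne
    · rw [Function.update_self]; omega
    · rw [Function.update_of_ne hne, Function.update_of_ne hi]
  · exact le_refl _

/-- for all sufficiently large `e`, `Δ_e^{(m)}(S) ⊆ Δ_e^{(m)}(φ(S))`. -/
theorem statement_6 (q m : ℕ) (hq : IsPrimePow q) (hm : 0 < m)
    (S : Set (Fin (m+1) → ℕ)) (hS : ∀ b ∈ S, ProjReduced q m b) (hfin : S.Finite) :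
    ∃ e₀ : ℕ, ∀ e ≥ e₀,
      footprintL q m e (Fin.last m) S ⊆
        footprintL q m e (Fin.last m) (phiExp q m S '' S) := by
  classical
  obtain ⟨N, hN⟩ : ∃ N, ∀ a ∈ S, a (Fin.last m) ≤ N :=
    ⟨hfin.toFinset.sup (fun a => a (Fin.last m)),
      fun a ha => Finset.le_sup (f := fun a => a (Fin.last m)) (hfin.mem_toFinset.mpr ha)⟩
  refine ⟨m * (q - 1) + N + 1, fun e he b hb => ?_⟩
  obtain ⟨⟨hbM, hbNS⟩, hbL⟩ := hb
  refine ⟨⟨hbM, ?_⟩, hbL⟩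
  rintro ⟨-, c, ⟨a, haS, rfl⟩, hle⟩
  have hblast : 0 < b (Fin.last m) := by
    rcases hbL.2.2 with h | h
    · exfalso; simp [Fin.last] at h; omega
    · exact h
  have hbound : ∀ i : Fin (m+1), i ≠ Fin.last m → b i ≤ q - 1 := by
    intro i hi
    exact hbM.1 i ⟨Fin.last m, Fin.lt_last_iff_ne_last.mpr hi, hblast⟩
  have hlastbig : N < b (Fin.last m) := by
    have h1 : ∑ i ∈ Finset.univ.erase (Fin.last m), b i ≤ m * (q-1) := by
      calc ∑ i ∈ Finset.univ.erase (Fin.last m), b i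
          ≤ ∑ _i ∈ Finset.univ.erase (Fin.last m), (q-1) :=
            Finset.sum_le_sum (fun i hi => hbound i (Finset.ne_of_mem_erase hi))
        _ = m * (q-1) := by
            rw [Finset.sum_const, Finset.card_erase_of_mem (Finset.mem_univ _)]
            simp [mul_comm]
    have h2 : ∑ i ∈ Finset.univ.erase (Fin.last m), b i + b (Fin.last m) = e := by
      rw [Finset.sum_erase_add _ _ (Finset.mem_univ _)]; exact hbM.2
    have := hN a haS
    omega
  exact hbNS ⟨hbM, a, haS, fun i => by
    rcases eq_or_ne i (Fin.last m) with rfl | hi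
    · exact le_of_lt (lt_of_le_of_lt (hN a haS) hlastbig)
    · exact le_trans (phi_ge_of_ne_last q m hm S a i hi) (hle i)⟩
end

section
/- Let q be a prime power, m a positive integer, and S a finite subset of M̄. Then there exists a nonnegative integer e_0 such that for all e ≥ e_0, |Δ_e^{(m−1)}(S) \ Δ_e^{(m−1)}(φ(S))| ≤ |Δ_e^{(m)}(φ(S)) \ Δ_e^{(m)}(S)|. -/
open scoped Classical

def preIdx (m : ℕ) : Fin (m+1) := ⟨m-1, Nat.lt_succ_of_le (m.sub_le 1)⟩

@[simp] lemma preIdx_val (m : ℕ) : ((preIdx m) : ℕ) = m - 1 := rfl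

/-- Candidates: elements of `S` moved by `φ` whose small-index exponents divide `b`. -/
def Cand (q m : ℕ) (S : Set (Fin (m+1) → ℕ)) (b : Fin (m+1) → ℕ) :
    Set (Fin (m+1) → ℕ) :=
  {ν ∈ S | phiExp q m S ν ≠ ν ∧ ∀ j : Fin (m+1), (j : ℕ) < m - 1 → ν j ≤ b j}

noncomputable def tmin (q m : ℕ) (S : Set (Fin (m+1) → ℕ)) (b : Fin (m+1) → ℕ) : ℕ :=
  sInf ((fun ν => ν (preIdx m)) '' Cand q m S b)

noncomputable def psiMap (q m : ℕ) (S : Set (Fin (m+1) → ℕ)) (b : Fin (m+1) → ℕ) :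
    Fin (m+1) → ℕ :=
  Function.update (Function.update b (preIdx m) (tmin q m S b)) (Fin.last m)
    (b (preIdx m) - tmin q m S b)

lemma pre_ne_last {m : ℕ} (hm : 0 < m) : ((preIdx m) : Fin (m+1)) ≠ Fin.last m := by
  intro h
  have := congrArg Fin.val h
  simp [Fin.val_last] at this
  omega

lemma fin_lt_pre {m : ℕ} (j : Fin (m+1)) (hjp : j ≠ (preIdx m)) (hjl : j ≠ Fin.last m) :
    (j : ℕ) < m - 1 := by
  have h1 : (j : ℕ) ≠ m - 1 := fun h => hjp (Fin.ext h)
  have h2 : (j : ℕ) ≠ m := fun h => hjl (Fin.ext h)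
  have := j.isLt
  omega

lemma phi_spec (q m : ℕ) (S : Set (Fin (m+1) → ℕ)) (ν : Fin (m+1) → ℕ)
    (h : phiExp q m S ν ≠ ν) :
    Function.update (Function.update ν (Fin.last m) 0) (preIdx m)
        (ν (preIdx m) + ν (Fin.last m)) ∉ S ∧
    ν (preIdx m) + 1 < q ∧
    phiExp q m S ν =
      Function.update (Function.update ν (Fin.last m) (ν (Fin.last m) - 1))
        (preIdx m) (ν (preIdx m) + 1) := by
  by_cases hc : Function.update (Function.update ν (Fin.last m) 0) (⟨m-1, by omega⟩ : Fin (m+1))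
      (ν ⟨m-1, by omega⟩ + ν (Fin.last m)) ∉ S ∧ ν (⟨m-1, by omega⟩ : Fin (m+1)) + 1 < q
  · exact ⟨hc.1, hc.2, by simp only [phiExp]; rw [if_pos hc]; rfl⟩
  · exact absurd (by simp only [phiExp]; rw [if_neg hc]) h

lemma phi_fix (q m : ℕ) (S : Set (Fin (m+1) → ℕ)) (ν : Fin (m+1) → ℕ)
    (h : phiExp q m S ν = ν) :
    Function.update (Function.update ν (Fin.last m) 0) (preIdx m)
        (ν (preIdx m) + ν (Fin.last m)) ∈ S ∨ ¬ (ν (preIdx m) + 1 < q) := by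
  by_cases hc : Function.update (Function.update ν (Fin.last m) 0) (⟨m-1, by omega⟩ : Fin (m+1))
      (ν ⟨m-1, by omega⟩ + ν (Fin.last m)) ∉ S ∧ ν (⟨m-1, by omega⟩ : Fin (m+1)) + 1 < q
  · exfalso
    have h2 : phiExp q m S ν =
        Function.update (Function.update ν (Fin.last m) (ν (Fin.last m) - 1))
          (⟨m-1, by omega⟩ : Fin (m+1)) (ν ⟨m-1, by omega⟩ + 1) := by
      simp only [phiExp]; rw [if_pos hc]
    have h3 := congrFun (h2.symm.trans h) ⟨m-1, by omega⟩
    rw [Function.update_self] at h3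
    omega
  · tauto

lemma psiMap_last (q m : ℕ) (S : Set (Fin (m+1) → ℕ)) (b : Fin (m+1) → ℕ) :
    psiMap q m S b (Fin.last m) = b (preIdx m) - tmin q m S b := by
  rw [psiMap, Function.update_self]

lemma psiMap_pre (q m : ℕ) (hm : 0 < m) (S : Set (Fin (m+1) → ℕ)) (b : Fin (m+1) → ℕ) :
    psiMap q m S b (preIdx m) = tmin q m S b := by
  rw [psiMap, Function.update_of_ne (pre_ne_last hm), Function.update_self]

lemma psiMap_other (q m : ℕ) (S : Set (Fin (m+1) → ℕ)) (b : Fin (m+1) → ℕ)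
    (j : Fin (m+1)) (hjp : j ≠ (preIdx m)) (hjl : j ≠ Fin.last m) :
    psiMap q m S b j = b j := by
  rw [psiMap, Function.update_of_ne hjl, Function.update_of_ne hjp]

/-- for all sufficiently large `e`,
`|Δ_e^{(m-1)}(S) \ Δ_e^{(m-1)}(φ(S))| ≤ |Δ_e^{(m)}(φ(S)) \ Δ_e^{(m)}(S)|`. -/
theorem statement_7 (q m : ℕ) (hq : IsPrimePow q) (hm : 0 < m)
    (S : Set (Fin (m+1) → ℕ)) (hS : ∀ b ∈ S, ProjReduced q m b) (hfin : S.Finite) :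
    ∃ e₀ : ℕ, ∀ e ≥ e₀,
      ((footprintL q m e ⟨m-1, by omega⟩ S) \
        (footprintL q m e ⟨m-1, by omega⟩ (phiExp q m S '' S))).ncard ≤
      ((footprintL q m e (Fin.last m) (phiExp q m S '' S)) \
        (footprintL q m e (Fin.last m) S)).ncard := by
  classical
  have hpl : ((preIdx m) : Fin (m+1)) ≠ Fin.last m := pre_ne_last hm
  obtain ⟨N, hN⟩ : ∃ N, ∀ ν ∈ S, ∑ i, ν i ≤ N :=
    ⟨hfin.toFinset.sup fun ν => ∑ i, ν i, fun ν hν =>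
      Finset.le_sup (f := fun ν => ∑ i, ν i) (hfin.mem_toFinset.mpr hν)⟩
  have hNc : ∀ ν ∈ S, ∀ i, ν i ≤ N := fun ν hν i =>
    le_trans (Finset.single_le_sum (fun _ _ => Nat.zero_le _) (Finset.mem_univ i)) (hN ν hν)
  refine ⟨N + m * q + q + 2, fun e he => ?_⟩
  have key : ∀ b ∈ (footprintL q m e (preIdx m) S) \
      (footprintL q m e (preIdx m) (phiExp q m S '' S)),
      psiMap q m S b ∈ (footprintL q m e (Fin.last m) (phiExp q m S '' S)) \
        (footprintL q m e (Fin.last m) S) ∧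
      tmin q m S b ≤ b (preIdx m) ∧ b (Fin.last m) = 0 := by
    intro b hb
    obtain ⟨hbF, hbN⟩ := hb
    obtain ⟨⟨hbM, hbSh⟩, hbL⟩ := hbF
    obtain ⟨hbM2, hbz, hbp⟩ := hbL
    have hblst : b (Fin.last m) = 0 := hbz (Fin.last m) (by
      rw [Fin.lt_def]; simp [Fin.val_last]; omega)
    have hred : ∀ j : Fin (m+1), (j : ℕ) < m - 1 → b j ≤ q - 1 := by
      intro j hj
      have hbpre : 0 < b (preIdx m) := by
        rcases hbp with h0 | h
        · exfalso; simp only [preIdx_val] at h0; omega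
        · exact h
      exact hbM.1 j ⟨(preIdx m), by rw [Fin.lt_def]; simpa using hj, hbpre⟩
    have hsum : ∑ i, b i = e := hbM.2
    have herase : ∑ i ∈ Finset.univ.erase (preIdx m), b i ≤ m * q := by
      have hbound : ∀ i ∈ Finset.univ.erase ((preIdx m) : Fin (m+1)), b i ≤ q := by
        intro i hi
        rcases lt_trichotomy ((i : ℕ)) (m-1) with h | h | h
        · have := hred i h; omega
        · exact absurd (Fin.ext h) (Finset.mem_erase.mp hi).1
        · have h0 : b i = 0 := hbz i (by rw [Fin.lt_def]; simpa using h)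
          omega
      calc ∑ i ∈ Finset.univ.erase ((preIdx m) : Fin (m+1)), b i
          ≤ (Finset.univ.erase ((preIdx m) : Fin (m+1))).card • q :=
            Finset.sum_le_card_nsmul _ _ _ hbound
        _ ≤ m * q := by
            rw [Finset.card_erase_of_mem (Finset.mem_univ _), smul_eq_mul]
            simp
    have hbpe : b (preIdx m) + ∑ i ∈ Finset.univ.erase (preIdx m), b i = e := by
      rw [Finset.add_sum_erase _ _ (Finset.mem_univ _)]; exact hsum
    have hbig : N + q + 2 ≤ b (preIdx m) := by omega
    have hbShphi : b ∈ shadow q m e (phiExp q m S '' S) := by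
      by_contra hcon
      exact hbN ⟨⟨hbM, hcon⟩, hbM, hbz, hbp⟩
    obtain ⟨-, a, ⟨μ, hμS, hμa⟩, hab⟩ := hbShphi
    have hμne : phiExp q m S μ ≠ μ := by
      intro hfix
      exact hbSh ⟨hbM, μ, hμS, fun i => by rw [← hfix, hμa]; exact hab i⟩
    obtain ⟨-, hμq, hμval⟩ := phi_spec q m S μ hμne
    have hμcand : μ ∈ Cand q m S b := by
      refine ⟨hμS, hμne, fun j hj => ?_⟩
      have hjp : j ≠ (preIdx m) := by
        intro h; rw [h] at hj; simp only [preIdx_val] at hj; omega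
      have hjl : j ≠ Fin.last m := by
        intro h; rw [h] at hj; simp only [Fin.val_last] at hj; omega
      have hμj : a j = μ j := by
        rw [← hμa, hμval, Function.update_of_ne hjp, Function.update_of_ne hjl]
      rw [← hμj]; exact hab j
    have hCne : ((fun ν => ν ((preIdx m) : Fin (m+1))) '' Cand q m S b).Nonempty :=
      ⟨μ (preIdx m), μ, hμcand, rfl⟩
    have htmem : tmin q m S b ∈ (fun ν => ν ((preIdx m) : Fin (m+1))) '' Cand q m S b :=
      Nat.sInf_mem hCne
    obtain ⟨ν₀, hν₀C, hν₀t⟩ := htmem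
    simp only at hν₀t
    have ht_le : ∀ ν ∈ Cand q m S b, tmin q m S b ≤ ν (preIdx m) := fun ν hν =>
      Nat.sInf_le ⟨ν, hν, rfl⟩
    obtain ⟨hν₀S, hν₀ne, hν₀div⟩ := hν₀C
    obtain ⟨-, hν₀q, -⟩ := phi_spec q m S ν₀ hν₀ne
    have htq : tmin q m S b + 1 < q := by omega
    have htb : tmin q m S b ≤ b (preIdx m) := by omega
    have hcp := psiMap_pre q m hm S b
    have hcl := psiMap_last q m S b
    have hcj := psiMap_other q m S b
    have hsum' : ∑ i, psiMap q m S b i = e := by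
      rw [psiMap]
      rw [Finset.sum_update_of_mem (Finset.mem_univ (Fin.last m))]
      rw [Finset.sum_update_of_mem
        (Finset.mem_sdiff.mpr ⟨Finset.mem_univ (preIdx m), by simp [hpl]⟩)]
      have h1 : ∑ i, b i = b (Fin.last m) + ∑ i ∈ Finset.univ \ {Fin.last m}, b i :=
        Finset.sum_eq_add_sum_sdiff_singleton_of_mem (Finset.mem_univ _) b
      have h2 : ∑ i ∈ Finset.univ \ {Fin.last m}, b i =
          b (preIdx m) + ∑ i ∈ (Finset.univ \ {Fin.last m}) \ {preIdx m}, b i :=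
        Finset.sum_eq_add_sum_sdiff_singleton_of_mem
          (Finset.mem_sdiff.mpr ⟨Finset.mem_univ _, by simp [hpl]⟩) b
      omega
    have hcred : ProjReduced q m (psiMap q m S b) := by
      intro j hj
      by_cases hjl : j = Fin.last m
      · exfalso
        obtain ⟨l, hl, -⟩ := hj
        have h1 := Fin.lt_def.mp hl
        have h2 := l.isLt
        subst hjl
        simp [Fin.val_last] at h1
        omega
      · by_cases hjp : j = (preIdx m)
        · subst hjp; rw [hcp]; omega
        · rw [hcj j hjp hjl]
          exact hred j (fin_lt_pre j hjp hjl)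
    have hcM : psiMap q m S b ∈ MbarDeg q m e := ⟨hcred, hsum'⟩
    have hcsh : psiMap q m S b ∉ shadow q m e (phiExp q m S '' S) := by
      rintro ⟨-, a', ⟨ν, hνS, rfl⟩, hac⟩
      by_cases hνe : phiExp q m S ν = ν
      · rw [hνe] at hac
        rcases phi_fix q m S ν hνe with hmerge | hq'
        · apply hbSh
          refine ⟨hbM, _, hmerge, fun i => ?_⟩
          by_cases hip : i = (preIdx m)
          · subst hip
            rw [Function.update_self]
            have hsν : ν (preIdx m) + ν (Fin.last m) ≤ N := by
              have hh := hN ν hνS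
              have he1 : ν ((preIdx m) : Fin (m+1)) + ν (Fin.last m) =
                  ∑ i ∈ ({(preIdx m), Fin.last m} : Finset (Fin (m+1))), ν i :=
                (Finset.sum_pair hpl).symm
              have hsub : ∑ i ∈ ({(preIdx m), Fin.last m} : Finset (Fin (m+1))), ν i
                  ≤ ∑ i, ν i :=
                Finset.sum_le_sum_of_subset (Finset.subset_univ _)
              omega
            omega
          · by_cases hil : i = Fin.last m
            · subst hil
              rw [Function.update_of_ne (Ne.symm hpl), Function.update_self]
              exact Nat.zero_le _
            · rw [Function.update_of_ne hip, Function.update_of_ne hil]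
              have h3 := hac i
              rw [hcj i hip hil] at h3
              exact h3
        · have h3 := hac (preIdx m)
          rw [hcp] at h3
          omega
      · have hcand : ν ∈ Cand q m S b := by
          refine ⟨hνS, hνe, fun j hj => ?_⟩
          have hjp : j ≠ (preIdx m) := by
            intro h; rw [h] at hj; simp only [preIdx_val] at hj; omega
          have hjl : j ≠ Fin.last m := by
            intro h; rw [h] at hj; simp only [Fin.val_last] at hj; omega
          obtain ⟨-, -, hval'⟩ := phi_spec q m S ν hνe
          have h3 := hac j
          rw [hval', Function.update_of_ne hjp, Function.update_of_ne hjl,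
            hcj j hjp hjl] at h3
          exact h3
        have h1 := ht_le ν hcand
        obtain ⟨-, -, hval'⟩ := phi_spec q m S ν hνe
        have h3 := hac (preIdx m)
        rw [hval', Function.update_self, hcp] at h3
        omega
    have hcS : psiMap q m S b ∈ shadow q m e S := by
      refine ⟨hcM, ν₀, hν₀S, fun i => ?_⟩
      by_cases hip : i = (preIdx m)
      · subst hip
        rw [hcp]
        omega
      · by_cases hil : i = Fin.last m
        · subst hil
          rw [hcl]
          have h4 : ν₀ (Fin.last m) ≤ N := hNc ν₀ hν₀S _
          omega
        · rw [hcj i hip hil]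
          exact hν₀div i (fin_lt_pre i hip hil)
    have hczero : ∀ i : Fin (m+1), Fin.last m < i → psiMap q m S b i = 0 := by
      intro i hi
      exfalso
      have h1 := Fin.lt_def.mp hi
      have h2 := i.isLt
      simp [Fin.val_last] at h1
      omega
    have hcpos : 0 < psiMap q m S b (Fin.last m) := by
      rw [hcl]; omega
    exact ⟨⟨⟨⟨hcM, hcsh⟩, hcM, hczero, Or.inr hcpos⟩, fun hc => hc.1.2 hcS⟩, htb, hblst⟩
  have hfinR : ((footprintL q m e (Fin.last m) (phiExp q m S '' S)) \
      (footprintL q m e (Fin.last m) S)).Finite := by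
    have h1 : (MbarDeg q m e).Finite := by
      have hsub : MbarDeg q m e ⊆ Set.pi Set.univ (fun _ : Fin (m+1) => Set.Iic e) := by
        intro b hb i _
        exact Set.mem_Iic.mpr (le_trans
          (Finset.single_le_sum (fun _ _ => Nat.zero_le _) (Finset.mem_univ i)) hb.2.le)
      exact (Set.Finite.pi fun _ => Set.finite_Iic e).subset hsub
    exact h1.subset fun b hb => hb.1.1.1
  apply Set.ncard_le_ncard_of_injOn (psiMap q m S) (fun b hb => (key b hb).1) ?_ hfinR
  intro b1 h1 b2 h2 hpsi
  obtain ⟨-, hle1, hz1⟩ := key b1 h1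
  obtain ⟨-, hle2, hz2⟩ := key b2 h2
  funext j
  by_cases hjl : j = Fin.last m
  · rw [hjl, hz1, hz2]
  · by_cases hjp : j = (preIdx m)
    · have e1 := congrFun hpsi (preIdx m)
      have e2 := congrFun hpsi (Fin.last m)
      rw [psiMap_pre q m hm S b1, psiMap_pre q m hm S b2] at e1
      rw [psiMap_last q m S b1, psiMap_last q m S b2] at e2
      subst hjp
      omega
    · have e1 := congrFun hpsi j
      rw [psiMap_other q m S b1 j hjp hjl, psiMap_other q m S b2 j hjp hjl] at e1
      exact e1
end

section
/- Let q be a prime power, m a positive integer, and S a finite subset of M̄. Then there exists a nonnegative integer e_0 such that |Δ_e(S)| ≤ |Δ_e(φ(S))| for all e ≥ e_0. -/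
open scoped Classical

def st8pre (m : ℕ) : Fin (m+1) := ⟨m-1, by omega⟩

def st8Mvd (q m : ℕ) (S : Set (Fin (m+1) → ℕ)) (ν : Fin (m+1) → ℕ) : Prop :=
  Function.update (Function.update ν (Fin.last m) 0) (st8pre m)
      (ν (st8pre m) + ν (Fin.last m)) ∉ S
    ∧ ν (st8pre m) + 1 < q

noncomputable def st8t (q m : ℕ) (S : Set (Fin (m+1) → ℕ)) (b : Fin (m+1) → ℕ) : ℕ :=
  sInf {n | ∃ ν, (ν ∈ S ∧ st8Mvd q m S ν ∧ ∀ j, j < st8pre m → ν j ≤ b j) ∧ ν (st8pre m) = n}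

noncomputable def st8c (q m : ℕ) (S : Set (Fin (m+1) → ℕ)) (b : Fin (m+1) → ℕ) :
    Fin (m+1) → ℕ :=
  Function.update (Function.update b (st8pre m) (st8t q m S b)) (Fin.last m)
    (b (st8pre m) - st8t q m S b)

theorem st8_phi_eq (q m : ℕ) (S : Set (Fin (m+1) → ℕ)) (ν : Fin (m+1) → ℕ) :
    phiExp q m S ν = if st8Mvd q m S ν then
      Function.update (Function.update ν (Fin.last m) (ν (Fin.last m) - 1)) (st8pre m)
        (ν (st8pre m) + 1)
    else ν := by
  simp only [phiExp, st8Mvd, st8pre]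
  split_ifs with h
  · exact (if_pos h).symm
  · exact (if_neg h).symm

theorem st8_sum_update_update {n : ℕ} (b : Fin n → ℕ) {i k : Fin n} (hik : i ≠ k) (x y : ℕ) :
    ∑ j, Function.update (Function.update b k x) i y j
      = y + x + ∑ j ∈ (Finset.univ.erase i).erase k, b j := by
  rw [Finset.sum_update_of_mem (Finset.mem_univ i),
    Finset.sum_update_of_mem (show k ∈ Finset.univ \ {i} by simp [hik.symm])]
  simp [Finset.erase_eq]
  ring

theorem st8_sum_split {n : ℕ} (b : Fin n → ℕ) {i k : Fin n} (hik : i ≠ k) :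
    ∑ j, b j = b i + b k + ∑ j ∈ (Finset.univ.erase i).erase k, b j := by
  rw [← Finset.add_sum_erase _ _ (Finset.mem_univ i),
    ← Finset.add_sum_erase _ _ (Finset.mem_erase.mpr ⟨hik.symm, Finset.mem_univ k⟩)]
  ring

theorem st8_pl {m : ℕ} (hm : 0 < m) : st8pre m ≠ Fin.last m := by
  intro h
  have : ((st8pre m : Fin (m+1)) : ℕ) = ((Fin.last m : Fin (m+1)) : ℕ) := congrArg Fin.val h
  simp only [st8pre, Fin.val_last] at this
  omega

theorem st8_plt {m : ℕ} (hm : 0 < m) : st8pre m < Fin.last m := by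
  rw [Fin.lt_def]
  show m - 1 < m
  omega

theorem st8_lt_pre {m : ℕ} (hm : 0 < m) (j : Fin (m+1)) (h1 : j ≠ st8pre m)
    (h2 : j ≠ Fin.last m) : j < st8pre m := by
  rw [Fin.lt_def]
  show (j : ℕ) < m - 1
  have hj := j.isLt
  have h1' : (j : ℕ) ≠ m - 1 := fun h => h1 (Fin.ext h)
  have h2' : (j : ℕ) ≠ m := fun h => h2 (Fin.ext h)
  omega

theorem st8_big (q m e d : ℕ) (he : m*q + q + d + 1 ≤ e)
    (b : Fin (m+1) → ℕ) (hbM : b ∈ MbarDeg q m e) (i : Fin (m+1)) (hi : 0 < b i)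
    (htop : ∀ j, i < j → b j = 0) : d + q ≤ b i := by
  obtain ⟨hred, hsum⟩ := hbM
  have hrest : ∑ j ∈ Finset.univ.erase i, b j ≤ m * (q-1) := by
    have hcard : (Finset.univ.erase i).card = m := by
      rw [Finset.card_erase_of_mem (Finset.mem_univ i)]
      simp
    calc ∑ j ∈ Finset.univ.erase i, b j ≤ ∑ _j ∈ Finset.univ.erase i, (q-1) := by
          apply Finset.sum_le_sum
          intro j hj
          rcases lt_or_gt_of_ne (Finset.ne_of_mem_erase hj) with h | h
          · exact hred j ⟨i, h, hi⟩
          · rw [htop j h]; exact Nat.zero_le _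
      _ = m * (q-1) := by rw [Finset.sum_const, hcard, smul_eq_mul]
  have hsplit : b i + ∑ j ∈ Finset.univ.erase i, b j = e := by
    rw [Finset.add_sum_erase _ _ (Finset.mem_univ i)]
    exact hsum
  have h1 : m * (q-1) ≤ m * q := Nat.mul_le_mul_left m (Nat.sub_le q 1)
  have h2 : (m+1)*q = m*q + q := by ring
  omega

theorem st8_dvd (q m e d : ℕ) (he : m*q + q + d + 1 ≤ e)
    (b : Fin (m+1) → ℕ) (hbM : b ∈ MbarDeg q m e) (i : Fin (m+1)) (hi : 0 < b i)
    (htop : ∀ j, i < j → b j = 0) (ν : Fin (m+1) → ℕ) (hνd : ∑ k, ν k ≤ d)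
    (hj : ∀ j, j ≠ i → ν j ≤ b j) : ∀ j, ν j ≤ b j := by
  intro j
  by_cases h : j = i
  · subst h
    have h1 := st8_big q m e d he b hbM j hi htop
    have h2 : ν j ≤ d :=
      le_trans (Finset.single_le_sum (fun _ _ => Nat.zero_le _) (Finset.mem_univ j)) hνd
    omega
  · exact hj j h

theorem st8_bad (q m e d : ℕ) (hm : 0 < m) (he : m*q + q + d + 1 ≤ e)
    (S : Set (Fin (m+1) → ℕ)) (hd : ∀ ν ∈ S, ∑ i, ν i ≤ d)
    (b : Fin (m+1) → ℕ) (hbf : b ∈ footprint q m e S)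
    (hbs : b ∈ shadow q m e (phiExp q m S '' S)) :
    b (Fin.last m) = 0 ∧ 0 < b (st8pre m) ∧
      ∃ ν, ν ∈ S ∧ st8Mvd q m S ν ∧ ∀ j, j < st8pre m → ν j ≤ b j := by
  obtain ⟨hbM, hnsh⟩ := hbf
  obtain ⟨-, ν', ⟨ν, hνS, rfl⟩, hdvd⟩ := hbs
  have hnotdvd : ¬ ∀ i, ν i ≤ b i := fun h => hnsh ⟨hbM, ν, hνS, h⟩
  by_cases hmv : st8Mvd q m S ν
  · rw [st8_phi_eq, if_pos hmv] at hdvd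
    have hjs : ∀ j, j ≠ st8pre m → j ≠ Fin.last m → ν j ≤ b j := by
      intro j h1 h2
      have := hdvd j
      rwa [Function.update_of_ne h1, Function.update_of_ne h2] at this
    have hpre' : ν (st8pre m) + 1 ≤ b (st8pre m) := by
      have := hdvd (st8pre m)
      rwa [Function.update_self] at this
    have hlst0 : b (Fin.last m) = 0 := by
      by_contra h
      apply hnotdvd
      apply st8_dvd q m e d he b hbM (Fin.last m) (Nat.pos_of_ne_zero h)
        (fun j hj => absurd hj (not_lt.mpr (Fin.le_last j))) ν (hd ν hνS)
      intro j hj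
      by_cases hjp : j = st8pre m
      · subst hjp; omega
      · exact hjs j hjp hj
    exact ⟨hlst0, by omega, ν, hνS, hmv,
      fun j hj => hjs j (ne_of_lt hj) (ne_of_lt (hj.trans (st8_plt hm)))⟩
  · rw [st8_phi_eq, if_neg hmv] at hdvd
    exact absurd hdvd hnotdvd

theorem st8_key (q m e d : ℕ) (hm : 0 < m) (hq2 : 2 ≤ q) (he : m*q + q + d + 1 ≤ e)
    (S : Set (Fin (m+1) → ℕ)) (hd : ∀ ν ∈ S, ∑ i, ν i ≤ d)
    (b : Fin (m+1) → ℕ) (hbf : b ∈ footprint q m e S)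
    (hbs : b ∈ shadow q m e (phiExp q m S '' S)) :
    st8c q m S b ∈ footprint q m e (phiExp q m S '' S) ∧
      st8c q m S b ∈ shadow q m e S := by
  obtain ⟨hlst0, hprepos, hW⟩ := st8_bad q m e d hm he S hd b hbf hbs
  obtain ⟨hbM, hnsh⟩ := hbf
  have htmem : st8t q m S b ∈
      {n | ∃ ν, (ν ∈ S ∧ st8Mvd q m S ν ∧ ∀ j, j < st8pre m → ν j ≤ b j) ∧ ν (st8pre m) = n} := by
    apply Nat.sInf_mem
    obtain ⟨ν, h1, h2, h3⟩ := hW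
    exact ⟨ν (st8pre m), ν, ⟨h1, h2, h3⟩, rfl⟩
  obtain ⟨μ, ⟨hμS, hμMv, hμle⟩, hμt⟩ := htmem
  have htmin : ∀ ν, ν ∈ S → st8Mvd q m S ν → (∀ j, j < st8pre m → ν j ≤ b j) →
      st8t q m S b ≤ ν (st8pre m) :=
    fun ν h1 h2 h3 => Nat.sInf_le ⟨ν, ⟨h1, h2, h3⟩, rfl⟩
  have htq : st8t q m S b + 2 ≤ q := by
    have := hμMv.2
    omega
  have htop : ∀ j, st8pre m < j → b j = 0 := by
    intro j hj
    have hjv : (m : ℕ) - 1 < (j : ℕ) := hj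
    have : j = Fin.last m := by
      apply Fin.ext
      have := j.isLt
      rw [Fin.val_last]
      omega
    rw [this]
    exact hlst0
  have hbig := st8_big q m e d he b hbM (st8pre m) hprepos htop
  have htle : st8t q m S b ≤ b (st8pre m) := by omega
  have hc_lst : st8c q m S b (Fin.last m) = b (st8pre m) - st8t q m S b :=
    Function.update_self _ _ _
  have hc_pre : st8c q m S b (st8pre m) = st8t q m S b := by
    rw [st8c, Function.update_of_ne (st8_pl hm), Function.update_self]
  have hc_other : ∀ j, j ≠ st8pre m → j ≠ Fin.last m → st8c q m S b j = b j := by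
    intro j h1 h2
    rw [st8c, Function.update_of_ne h2, Function.update_of_ne h1]
  have hcM : st8c q m S b ∈ MbarDeg q m e := by
    constructor
    · intro j hj
      by_cases h2 : j = Fin.last m
      · exfalso
        obtain ⟨l, hl, -⟩ := hj
        rw [h2] at hl
        exact absurd hl (not_lt.mpr (Fin.le_last l))
      by_cases h1 : j = st8pre m
      · rw [h1, hc_pre]; omega
      · rw [hc_other j h1 h2]
        exact hbM.1 j ⟨st8pre m, st8_lt_pre hm j h1 h2, hprepos⟩
    · rw [st8c, st8_sum_update_update b (st8_pl hm).symm]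
      have hsl := st8_sum_split b (st8_pl hm).symm
      have hsum := hbM.2
      omega
  have hc_nsh : st8c q m S b ∉ shadow q m e (phiExp q m S '' S) := by
    rintro ⟨-, ν', ⟨ν, hνS, rfl⟩, hdvd⟩
    by_cases hmv : st8Mvd q m S ν
    · rw [st8_phi_eq, if_pos hmv] at hdvd
      have h1 : ν (st8pre m) + 1 ≤ st8t q m S b := by
        have := hdvd (st8pre m)
        rwa [Function.update_self, hc_pre] at this
      have h2 : ∀ j, j < st8pre m → ν j ≤ b j := by
        intro j hj
        have hjl : j ≠ Fin.last m := ne_of_lt (hj.trans (st8_plt hm))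
        have := hdvd j
        rwa [Function.update_of_ne (ne_of_lt hj), Function.update_of_ne hjl,
          hc_other j (ne_of_lt hj) hjl] at this
      have := htmin ν hνS hmv h2
      omega
    · rw [st8_phi_eq, if_neg hmv] at hdvd
      have hνpre : ν (st8pre m) ≤ st8t q m S b := by
        have := hdvd (st8pre m)
        rwa [hc_pre] at this
      have hlow : ∀ j, j < st8pre m → ν j ≤ b j := by
        intro j hj
        have hjl : j ≠ Fin.last m := ne_of_lt (hj.trans (st8_plt hm))
        have := hdvd j
        rwa [hc_other j (ne_of_lt hj) hjl] at this
      by_cases h0 : ν (Fin.last m) = 0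
      · apply hnsh
        refine ⟨hbM, ν, hνS,
          st8_dvd q m e d he b hbM (st8pre m) hprepos htop ν (hd ν hνS) ?_⟩
        intro j hj
        by_cases h2 : j = Fin.last m
        · rw [h2, h0]; exact Nat.zero_le _
        · exact hlow j (st8_lt_pre hm j hj h2)
      · have hq' : ν (st8pre m) + 1 < q := by omega
        have hpd : Function.update (Function.update ν (Fin.last m) 0) (st8pre m)
            (ν (st8pre m) + ν (Fin.last m)) ∈ S := by
          by_contra hcon
          exact hmv ⟨hcon, hq'⟩
        apply hnsh
        refine ⟨hbM, _, hpd,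
          st8_dvd q m e d he b hbM (st8pre m) hprepos htop _ ?_ ?_⟩
        · rw [st8_sum_update_update ν (st8_pl hm)]
          have hsν := st8_sum_split ν (st8_pl hm)
          have := hd ν hνS
          omega
        · intro j hj
          by_cases h2 : j = Fin.last m
          · rw [h2, Function.update_of_ne (st8_pl hm).symm, Function.update_self]
            exact Nat.zero_le _
          · rw [Function.update_of_ne hj, Function.update_of_ne h2]
            exact hlow j (st8_lt_pre hm j hj h2)
  have hc_shS : st8c q m S b ∈ shadow q m e S := by
    refine ⟨hcM, μ, hμS, ?_⟩
    intro j
    by_cases h2 : j = Fin.last m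
    · rw [h2, hc_lst]
      have hμd : μ (Fin.last m) ≤ d :=
        le_trans (Finset.single_le_sum (fun _ _ => Nat.zero_le _) (Finset.mem_univ _))
          (hd μ hμS)
      omega
    by_cases h1 : j = st8pre m
    · rw [h1, hc_pre]; omega
    · rw [hc_other j h1 h2]
      exact hμle j (st8_lt_pre hm j h1 h2)
  exact ⟨⟨hcM, hc_nsh⟩, hc_shS⟩

/-- for all sufficiently large `e`, `|Δ_e(S)| ≤ |Δ_e(φ(S))|`. -/
theorem statement_8 (q m : ℕ) (hq : IsPrimePow q) (hm : 0 < m)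
    (S : Set (Fin (m+1) → ℕ)) (hS : ∀ b ∈ S, ProjReduced q m b) (hfin : S.Finite) :
    ∃ e₀ : ℕ, ∀ e ≥ e₀,
      (footprint q m e S).ncard ≤ (footprint q m e (phiExp q m S '' S)).ncard := by
  classical
  have hq2 : 2 ≤ q := hq.two_le
  obtain ⟨d, hd⟩ : ∃ d, ∀ ν ∈ S, ∑ i, ν i ≤ d := by
    obtain ⟨d, hd⟩ := (hfin.image (fun ν => ∑ i, ν i)).bddAbove
    exact ⟨d, fun ν hν => hd (Set.mem_image_of_mem _ hν)⟩
  refine ⟨m*q + q + d + 1, fun e he => ?_⟩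
  have hfinM : (MbarDeg q m e).Finite := by
    apply (Set.finite_Icc (fun _ : Fin (m+1) => 0) (fun _ => e)).subset
    intro b hb
    rw [Set.mem_Icc]
    refine ⟨fun i => Nat.zero_le _, fun i => ?_⟩
    calc b i ≤ ∑ j, b j :=
          Finset.single_le_sum (fun _ _ => Nat.zero_le _) (Finset.mem_univ i)
      _ = e := hb.2
  have hfinT : (footprint q m e (phiExp q m S '' S)).Finite := hfinM.subset Set.diff_subset
  -- injectivity helper: recover b from st8c in the bad case
  have hrec : ∀ b1 b2 : Fin (m+1) → ℕ,
      b1 ∈ footprint q m e S → b1 ∈ shadow q m e (phiExp q m S '' S) →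
      b2 ∈ footprint q m e S → b2 ∈ shadow q m e (phiExp q m S '' S) →
      st8c q m S b1 = st8c q m S b2 → b1 = b2 := by
    intro b1 b2 hf1 hs1 hf2 hs2 heq
    obtain ⟨hl1, hp1, -⟩ := st8_bad q m e d hm he S hd b1 hf1 hs1
    obtain ⟨hl2, hp2, -⟩ := st8_bad q m e d hm he S hd b2 hf2 hs2
    have hoth : ∀ j, j ≠ st8pre m → j ≠ Fin.last m → b1 j = b2 j := by
      intro j h1 h2
      have e1 : st8c q m S b1 j = b1 j := by
        rw [st8c, Function.update_of_ne h2, Function.update_of_ne h1]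
      have e2 : st8c q m S b2 j = b2 j := by
        rw [st8c, Function.update_of_ne h2, Function.update_of_ne h1]
      rw [← e1, ← e2, heq]
    have hRsum : ∑ j ∈ (Finset.univ.erase (Fin.last m)).erase (st8pre m), b1 j
        = ∑ j ∈ (Finset.univ.erase (Fin.last m)).erase (st8pre m), b2 j := by
      apply Finset.sum_congr rfl
      intro j hj
      obtain ⟨hjp, hjl⟩ := Finset.mem_erase.mp hj
      exact hoth j hjp (Finset.ne_of_mem_erase hjl)
    have hpre_eq : b1 (st8pre m) = b2 (st8pre m) := by
      have hs1' := st8_sum_split b1 (Ne.symm (st8_pl hm))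
      have hs2' := st8_sum_split b2 (Ne.symm (st8_pl hm))
      have he1 := hf1.1.2
      have he2 := hf2.1.2
      omega
    funext j
    by_cases h2 : j = Fin.last m
    · rw [h2, hl1, hl2]
    by_cases h1 : j = st8pre m
    · rw [h1, hpre_eq]
    · exact hoth j h1 h2
  refine Set.ncard_le_ncard_of_injOn
    (fun b => if b ∈ shadow q m e (phiExp q m S '' S) then st8c q m S b else b)
    ?_ ?_ hfinT
  · intro b hb
    by_cases hbs : b ∈ shadow q m e (phiExp q m S '' S)
    · simp only [if_pos hbs]
      exact (st8_key q m e d hm hq2 he S hd b hb hbs).1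
    · simp only [if_neg hbs]
      exact ⟨hb.1, hbs⟩
  · intro b1 h1 b2 h2 heq
    simp only at heq
    by_cases hs1 : b1 ∈ shadow q m e (phiExp q m S '' S) <;>
      by_cases hs2 : b2 ∈ shadow q m e (phiExp q m S '' S)
    · rw [if_pos hs1, if_pos hs2] at heq
      exact hrec b1 b2 h1 hs1 h2 hs2 heq
    · rw [if_pos hs1, if_neg hs2] at heq
      exact absurd (heq ▸ (st8_key q m e d hm hq2 he S hd b1 h1 hs1).2) h2.2
    · rw [if_neg hs1, if_pos hs2] at heq
      exact absurd (heq ▸ (st8_key q m e d hm hq2 he S hd b2 h2 hs2).2) h1.2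
    · rw [if_neg hs1, if_neg hs2] at heq
      exact heq
end

section
/- Let q be a prime power, m a positive integer, d a nonnegative integer, and r a positive integer with r ≤ C(m+d, d) − r_d. Then e_{r + r_d}(d, m) = ē_r(d, m). In particular, e_r(d, m) = ē_r(d, m) whenever d ≤ q. -/
open scoped Classical

set_option linter.unusedSectionVars false
set_option linter.unusedVariables false

namespace Aux9
open MvPolynomial

/-- reduce an exponent `e` to a congruent one in `[1, q-1]` (or `0` if `e = 0`). -/
def redExp (q e : ℕ) : ℕ := if e = 0 then 0 else (e-1) % (q-1) + 1

lemma redExp_le (q e : ℕ) : redExp q e ≤ e := by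
  unfold redExp; split
  · omega
  · have := Nat.mod_le (e-1) (q-1); omega

lemma redExp_le_q (q e : ℕ) (hq : 2 ≤ q) : redExp q e ≤ q - 1 := by
  unfold redExp; split
  · omega
  · have : (e-1) % (q-1) < q-1 := Nat.mod_lt _ (by omega)
    omega

lemma redExp_pos_iff (q e : ℕ) : 0 < redExp q e ↔ 0 < e := by
  unfold redExp; split <;> omega

lemma redExp_dvd (q e : ℕ) : (q-1) ∣ e - redExp q e := by
  unfold redExp; split
  · simp [show e = 0 from ‹_›]
  · have h := Nat.mod_add_div (e-1) (q-1)
    exact ⟨(e-1)/(q-1), by omega⟩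

variable {Fq : Type} [Field Fq] [Fintype Fq]

lemma pow_eq_pow {q : ℕ} (hcard : Fintype.card Fq = q) (a : Fq) {e f : ℕ}
    (hf : 0 < f) (hfe : f ≤ e) (hdvd : (q-1) ∣ e - f) : a ^ e = a ^ f := by
  obtain ⟨k, hk⟩ := hdvd
  have he : e = f + (q-1) * k := by omega
  subst he
  rcases eq_or_ne a 0 with rfl | ha
  · rw [zero_pow (by omega), zero_pow (by omega)]
  · rw [pow_add, pow_mul, ← hcard,
      FiniteField.pow_card_sub_one_eq_one a ha, one_pow, mul_one]

lemma pow_redExp {q : ℕ} (hcard : Fintype.card Fq = q) (a : Fq) (e : ℕ) :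
    a ^ e = a ^ redExp q e := by
  rcases Nat.eq_zero_or_pos e with rfl | he
  · simp [redExp]
  · exact pow_eq_pow hcard a ((redExp_pos_iff q e).2 he) (redExp_le q e) (redExp_dvd q e)

lemma sum_coe (m : ℕ) (s : Fin (m+1) →₀ ℕ) : Finsupp.degree s = ∑ i, s i := by
  rw [Finsupp.degree]
  exact Finset.sum_subset (Finset.subset_univ _)
    (fun i _ hi => Finsupp.notMem_support_iff.mp hi)

lemma sum_eq_of_mem_support {m d : ℕ} {F : MvPolynomial (Fin (m+1)) Fq}
    (hF : F.IsHomogeneous d) {s : Fin (m+1) →₀ ℕ} (hs : s ∈ F.support) :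
    ∑ i, s i = d := by
  rw [← sum_coe, Finsupp.degree_eq_weight_one]
  exact hF (MvPolynomial.mem_support_iff.mp hs)

set_option linter.unusedSectionVars false

lemma exists_reduced_rep {q m : ℕ} (hq : 2 ≤ q) (hcard : Fintype.card Fq = q)
    (s : Fin (m+1) →₀ ℕ) :
    ∃ s' : Fin (m+1) →₀ ℕ, ProjReduced q m ⇑s' ∧ (∑ i, s' i) = (∑ i, s i) ∧
      ∀ v : Fin (m+1) → Fq, (∏ i, v i ^ s' i) = ∏ i, v i ^ s i := by
  rcases eq_or_ne s 0 with rfl | hs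
  · exact ⟨0, fun j ⟨l, _, hl⟩ => by simp at hl, rfl, fun v => rfl⟩
  · have hne : s.support.Nonempty := Finsupp.support_nonempty_iff.mpr hs
    obtain ⟨ℓ, hℓmem, hℓ⟩ := Finset.exists_mem_eq_sup s.support hne id
    have hle : ∀ i ∈ s.support, i ≤ ℓ := by
      intro i hi
      have := Finset.le_sup (f := id) hi
      rwa [hℓ] at this
    have hsℓ : 0 < s ℓ := Nat.pos_of_ne_zero (Finsupp.mem_support_iff.mp hℓmem)
    have hzero : ∀ i : Fin (m+1), ℓ < i → s i = 0 := by
      intro i hi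
      by_contra h
      exact absurd (hle i (Finsupp.mem_support_iff.mpr h)) (not_le.mpr hi)
    set D : ℕ := ∑ j ∈ Finset.univ.erase ℓ, (s j - redExp q (s j)) with hD
    set b : Fin (m+1) → ℕ := Function.update (fun i => redExp q (s i)) ℓ (s ℓ + D) with hb
    have hbℓ : b ℓ = s ℓ + D := Function.update_self _ _ _
    have hbne : ∀ j, j ≠ ℓ → b j = redExp q (s j) := fun j hj => Function.update_of_ne hj _ _
    refine ⟨Finsupp.equivFunOnFinite.symm b, ?_, ?_, ?_⟩
    · intro j ⟨l, hjl, hl⟩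
      simp only [Finsupp.coe_equivFunOnFinite_symm] at hl ⊢
      have hlℓ : ¬ (ℓ < l) := by
        intro hlt
        rw [hbne l (fun h => absurd (h ▸ hlt) (lt_irrefl _)), hzero l hlt] at hl
        simp [redExp] at hl
      have hjℓ : j ≠ ℓ := fun h => absurd (lt_of_lt_of_le hjl (not_lt.mp hlℓ)) (by simp [h])
      rw [hbne j hjℓ]
      exact redExp_le_q q _ hq
    · simp only [Finsupp.coe_equivFunOnFinite_symm]
      rw [← Finset.add_sum_erase _ b (Finset.mem_univ ℓ),
        ← Finset.add_sum_erase _ s (Finset.mem_univ ℓ)]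
      have h1 : ∑ j ∈ Finset.univ.erase ℓ, b j
          = ∑ j ∈ Finset.univ.erase ℓ, redExp q (s j) := by
        exact Finset.sum_congr rfl fun j hj => hbne j (Finset.ne_of_mem_erase hj)
      have h2 : ∑ j ∈ Finset.univ.erase ℓ, s j
          = D + ∑ j ∈ Finset.univ.erase ℓ, redExp q (s j) := by
        rw [hD, ← Finset.sum_add_distrib]
        refine Finset.sum_congr rfl fun j hj => ?_
        have := redExp_le q (s j); omega
      rw [h1, hbℓ]; omega
    · intro v
      simp only [Finsupp.coe_equivFunOnFinite_symm]
      rw [← Finset.mul_prod_erase _ (fun i => v i ^ b i) (Finset.mem_univ ℓ),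
        ← Finset.mul_prod_erase _ (fun i => v i ^ s i) (Finset.mem_univ ℓ)]
      have h1 : ∀ j ∈ Finset.univ.erase ℓ, v j ^ b j = v j ^ s j := by
        intro j hj
        rw [hbne j (Finset.ne_of_mem_erase hj)]
        exact (pow_redExp hcard (v j) (s j)).symm
      rw [Finset.prod_congr rfl h1]
      congr 1
      have hdvd : (q-1) ∣ D := Finset.dvd_sum fun j _ => redExp_dvd q (s j)
      rw [hbℓ]
      exact pow_eq_pow hcard (v ℓ) hsℓ (by omega) (by rwa [Nat.add_sub_cancel_left])

noncomputable def Rsub (q m d : ℕ) (Fq : Type) [Field Fq] :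
    Submodule Fq (MvPolynomial (Fin (m+1)) Fq) :=
  Submodule.span Fq ((fun s : Fin (m+1) →₀ ℕ => (monomial s (1:Fq))) ''
    {s | ProjReduced q m ⇑s ∧ ∑ i, s i = d})

noncomputable def Zsub (m d : ℕ) (Fq : Type) [Field Fq] :
    Submodule Fq (MvPolynomial (Fin (m+1)) Fq) :=
  (homogeneousSubmodule (Fin (m+1)) Fq d) ⊓
    (⨅ v : Fin (m+1) → Fq, LinearMap.ker (MvPolynomial.aeval (R := Fq) v).toLinearMap)

lemma aeval_lm (v : Fin (m+1) → Fq) (p : MvPolynomial (Fin (m+1)) Fq) :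
    (MvPolynomial.aeval (R := Fq) v).toLinearMap p = eval v p := by
  simp only [AlgHom.toLinearMap_apply]
  rw [show (MvPolynomial.aeval (R := Fq) v) p
    = RingHomClass.toRingHom (MvPolynomial.aeval (R := Fq) v) p from rfl, coe_aeval_eq_eval]

variable {m : ℕ}

lemma mem_Zsub_iff {d : ℕ} (p : MvPolynomial (Fin (m+1)) Fq) :
    p ∈ Zsub m d Fq ↔ p.IsHomogeneous d ∧ ∀ v, eval v p = 0 := by
  rw [Zsub, Submodule.mem_inf, mem_homogeneousSubmodule]
  refine and_congr Iff.rfl ?_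
  rw [Submodule.mem_iInf]
  refine forall_congr' fun v => ?_
  rw [LinearMap.mem_ker, aeval_lm]

lemma mem_Rsub_of_reduced {q d : ℕ} (p : MvPolynomial (Fin (m+1)) Fq)
    (hred : ∀ s ∈ p.support, ProjReduced q m ⇑s) (hhom : p.IsHomogeneous d) :
    p ∈ Rsub q m d Fq := by
  rw [← support_sum_monomial_coeff p]
  refine Submodule.sum_mem _ fun s hs => ?_
  have : (monomial s) (coeff s p) = (coeff s p) • (monomial s (1:Fq)) := by
    rw [MvPolynomial.smul_monomial, smul_eq_mul, mul_one]
  rw [this]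
  exact Submodule.smul_mem _ _ (Submodule.subset_span
    ⟨s, ⟨hred s hs, sum_eq_of_mem_support hhom hs⟩, rfl⟩)

lemma Rsub_le_homog (q d : ℕ) :
    Rsub q m d Fq ≤ homogeneousSubmodule (Fin (m+1)) Fq d := by
  rw [Rsub, Submodule.span_le]
  rintro _ ⟨s, ⟨-, hsum⟩, rfl⟩
  rw [SetLike.mem_coe, mem_homogeneousSubmodule]
  exact isHomogeneous_monomial _ (by rw [sum_coe]; exact hsum)

lemma reduced_of_mem_Rsub {q d : ℕ} (p : MvPolynomial (Fin (m+1)) Fq)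
    (hp : p ∈ Rsub q m d Fq) : ∀ s ∈ p.support, ProjReduced q m ⇑s := by
  refine Submodule.span_induction ?_ ?_ ?_ ?_ hp
  · rintro _ ⟨s, ⟨hred, -⟩, rfl⟩ t ht
    have := MvPolynomial.support_monomial (s := s) (a := (1:Fq))
    rw [this, if_neg one_ne_zero] at ht
    rwa [Finset.mem_singleton.mp ht]
  · intro t ht; simp at ht
  · intro x y _ _ hx hy t ht
    rcases Finset.mem_union.mp (MvPolynomial.support_add ht) with h | h
    · exact hx t h
    · exact hy t h
  · intro c x _ hx t ht
    exact hx t (MvPolynomial.support_smul ht)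

lemma homog_le_Rsub_sup_Zsub {q d : ℕ} (hq : 2 ≤ q) (hcard : Fintype.card Fq = q) :
    homogeneousSubmodule (Fin (m+1)) Fq d ≤ Rsub q m d Fq ⊔ Zsub m d Fq := by
  intro p hp
  rw [mem_homogeneousSubmodule] at hp
  rw [← support_sum_monomial_coeff p]
  refine Submodule.sum_mem _ fun s hs => ?_
  obtain ⟨s', hred, hsum, heval⟩ := exists_reduced_rep hq hcard s
  have hsd : ∑ i, s i = d := sum_eq_of_mem_support hp hs
  have hs'd : ∑ i, s' i = d := by rw [hsum, hsd]
  have h1 : (monomial s') (coeff s p) ∈ Rsub q m d Fq := by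
    have : (monomial s') (coeff s p) = (coeff s p) • (monomial s' (1:Fq)) := by
      rw [MvPolynomial.smul_monomial, smul_eq_mul, mul_one]
    rw [this]
    exact Submodule.smul_mem _ _ (Submodule.subset_span ⟨s', ⟨hred, hs'd⟩, rfl⟩)
  have h2 : (monomial s) (coeff s p) - (monomial s') (coeff s p) ∈ Zsub m d Fq := by
    rw [mem_Zsub_iff]
    constructor
    · exact MvPolynomial.IsHomogeneous.sub
        (isHomogeneous_monomial _ (by rw [sum_coe]; exact hsd))
        (isHomogeneous_monomial _ (by rw [sum_coe]; exact hs'd))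
    · intro v
      rw [map_sub, eval_monomial, eval_monomial, Finsupp.prod_pow, Finsupp.prod_pow,
        heval v, sub_self]
  have : (monomial s) (coeff s p)
      = (monomial s') (coeff s p) + ((monomial s) (coeff s p) - (monomial s') (coeff s p)) := by
    ring
  rw [this]
  exact Submodule.add_mem _ (Submodule.mem_sup_left h1) (Submodule.mem_sup_right h2)

lemma eq_zero_of_reduced_homog_eval_zero {q d : ℕ} (hq : 2 ≤ q) (hcard : Fintype.card Fq = q)
    (G : MvPolynomial (Fin (m+1)) Fq)
    (hred : ∀ s ∈ G.support, ProjReduced q m ⇑s) (hhom : G.IsHomogeneous d)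
    (h0 : ∀ v, eval v G = 0) : G = 0 := by
  rcases Nat.eq_zero_or_pos d with rfl | hd
  · have hG : G = C (coeff 0 G) := by
      apply MvPolynomial.ext
      intro t
      rcases eq_or_ne t 0 with rfl | ht
      · simp [MvPolynomial.coeff_C]
      · rw [MvPolynomial.coeff_C, if_neg (fun h => ht h.symm)]
        by_contra hc
        have hsum := sum_eq_of_mem_support hhom (MvPolynomial.mem_support_iff.mpr hc)
        apply ht
        ext i
        have h1 : t i ≤ ∑ j, t j := Finset.single_le_sum (fun _ _ => Nat.zero_le _) (Finset.mem_univ i)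
        simp only [Finsupp.coe_zero, Pi.zero_apply]
        omega
    have h00 := h0 (fun _ => 0)
    rw [hG, eval_C] at h00
    rw [hG, h00, map_zero]
  · by_contra hG
    set top : (Fin (m+1) →₀ ℕ) → Fin (m+1) := fun t => t.support.sup id with htop
    have htopmem : ∀ t ∈ G.support, top t ∈ t.support ∧ ∀ i ∈ t.support, i ≤ top t := by
      intro t ht
      have htne : t ≠ 0 := by
        intro h
        have := sum_eq_of_mem_support hhom ht
        rw [h] at this; simp at this; omega
      have hne : t.support.Nonempty := Finsupp.support_nonempty_iff.mpr htne
      obtain ⟨i, hi, hsup⟩ := Finset.exists_mem_eq_sup t.support hne id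
      constructor
      · rw [htop]; simpa [hsup] using hi
      · intro j hj
        exact Finset.le_sup (f := id) hj
    have key : ∀ n : ℕ, ∀ s ∈ G.support, (top s : ℕ) = n → False := by
      intro n
      induction n using Nat.strong_induction_on with
      | _ n IH =>
      intro s hs hn
      set ℓ : Fin (m+1) := top s with hℓ
      set sub : Fin (m+1) → MvPolynomial (Fin (m+1)) Fq :=
        fun i => if i < ℓ then X i else if i = ℓ then 1 else 0 with hsub
      set Q : MvPolynomial (Fin (m+1)) Fq := eval₂ C sub G with hQdef
      have hQ0 : ∀ v, eval v Q = 0 := fun v => by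
        rw [hQdef, ← eval_assoc]; exact h0 _
      have hntop : ∀ t ∈ G.support, n ≤ (top t : ℕ) := by
        intro t ht
        by_contra hlt
        exact IH _ (by omega) t ht rfl
      have htℓ : ∀ t ∈ G.support, (top t : ℕ) = n → top t = ℓ := by
        intro t ht h
        apply Fin.ext; rw [h, ← hn]
      have hterm_eq : ∀ t ∈ G.support, (top t : ℕ) = n →
          C (coeff t G) * ∏ i ∈ t.support, sub i ^ t i
            = monomial (t.erase ℓ) (coeff t G) := by
        intro t ht htn
        have htt := htℓ t ht htn
        have hmem : ℓ ∈ t.support := htt ▸ (htopmem t ht).1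
        rw [monomial_eq, Finsupp.prod]
        congr 1
        rw [← Finset.mul_prod_erase _ _ hmem, Finsupp.support_erase]
        have hsubℓ : sub ℓ = 1 := by rw [hsub]; simp
        rw [hsubℓ, one_pow, one_mul]
        refine Finset.prod_congr rfl fun i hi => ?_
        have hine : i ≠ ℓ := Finset.ne_of_mem_erase hi
        have hile : i ≤ top t := (htopmem t ht).2 i (Finset.mem_of_mem_erase hi)
        have hilt : i < ℓ := lt_of_le_of_ne (htt ▸ hile) hine
        rw [hsub]
        simp only [if_pos hilt]
        rw [Finsupp.erase_ne hine]
      have hterm_gt : ∀ t ∈ G.support, n < (top t : ℕ) →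
          C (coeff t G) * ∏ i ∈ t.support, sub i ^ t i = 0 := by
        intro t ht htn
        have hmem : top t ∈ t.support := (htopmem t ht).1
        have hsub0 : sub (top t) = 0 := by
          rw [hsub]
          have hℓn : (ℓ : ℕ) = n := hn
          have h1 : ¬ (top t < ℓ) := by rw [Fin.lt_def]; omega
          have h2 : top t ≠ ℓ := by
            intro h
            rw [Fin.ext_iff] at h
            omega
          simp only [if_neg h1, if_neg h2]
        have hzp : sub (top t) ^ t (top t) = 0 := by
          rw [hsub0]
          exact zero_pow (Finsupp.mem_support_iff.mp hmem)
        rw [Finset.prod_eq_zero hmem hzp, mul_zero]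
      have hQ2 : Q = ∑ t ∈ G.support.filter (fun t => (top t : ℕ) = n),
          monomial (t.erase ℓ) (coeff t G) := by
        rw [hQdef, eval₂_eq,
          ← Finset.sum_filter_add_sum_filter_not G.support (fun t => (top t : ℕ) = n)]
        have hz : ∑ t ∈ G.support.filter (fun t => ¬ (top t : ℕ) = n),
            C (coeff t G) * ∏ i ∈ t.support, sub i ^ t i = 0 := by
          refine Finset.sum_eq_zero fun t ht => ?_
          rw [Finset.mem_filter] at ht
          exact hterm_gt t ht.1 (lt_of_le_of_ne (hntop t ht.1) (Ne.symm ht.2))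
        rw [hz, add_zero]
        refine Finset.sum_congr rfl fun t ht => ?_
        rw [Finset.mem_filter] at ht
        exact hterm_eq t ht.1 ht.2
      -- injectivity
      have hinj : ∀ t ∈ G.support, (top t : ℕ) = n → t.erase ℓ = s.erase ℓ → t = s := by
        intro t ht htn herase
        have hsums : ∑ i, s i = d := sum_eq_of_mem_support hhom hs
        have hsumt : ∑ i, t i = d := sum_eq_of_mem_support hhom ht
        have hagree : ∀ i, i ≠ ℓ → t i = s i := by
          intro i hi
          have h := DFunLike.congr_fun herase i
          rwa [Finsupp.erase_ne hi, Finsupp.erase_ne hi] at h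
        have h1 : ∑ i ∈ Finset.univ.erase ℓ, t i = ∑ i ∈ Finset.univ.erase ℓ, s i :=
          Finset.sum_congr rfl fun i hi => hagree i (Finset.ne_of_mem_erase hi)
        have h2 := Finset.add_sum_erase Finset.univ (⇑t) (Finset.mem_univ ℓ)
        have h3 := Finset.add_sum_erase Finset.univ (⇑s) (Finset.mem_univ ℓ)
        have htℓsℓ : t ℓ = s ℓ := by omega
        ext i
        rcases eq_or_ne i ℓ with rfl | hi
        · exact htℓsℓ
        · exact hagree i hi
      have hcoeff : coeff (s.erase ℓ) Q = coeff s G := by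
        rw [hQ2, MvPolynomial.coeff_sum]
        rw [Finset.sum_eq_single_of_mem s (Finset.mem_filter.mpr ⟨hs, hn⟩)]
        · rw [MvPolynomial.coeff_monomial, if_pos rfl]
        · intro t ht hts
          rw [Finset.mem_filter] at ht
          rw [MvPolynomial.coeff_monomial, if_neg]
          intro h
          exact hts (hinj t ht.1 ht.2 h)
      have hQmem : Q ∈ restrictDegree (Fin (m+1)) Fq (Fintype.card Fq - 1) := by
        rw [mem_restrictDegree]
        intro u hu i
        rw [hQ2] at hu
        have := MvPolynomial.support_sum hu
        rw [Finset.mem_biUnion] at this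
        obtain ⟨t, ht, hut⟩ := this
        rw [Finset.mem_filter] at ht
        have hu_eq : u = t.erase ℓ := by
          have := MvPolynomial.support_monomial (s := t.erase ℓ) (a := coeff t G) ▸ hut
          by_cases hc : coeff t G = 0
          · rw [if_pos hc] at this; simp at this
          · rw [if_neg hc] at this; exact Finset.mem_singleton.mp this
        subst hu_eq
        rcases eq_or_ne i ℓ with rfl | hi
        · simp [hcard]
        · rw [Finsupp.erase_ne hi, hcard]
          have htt := htℓ t ht.1 ht.2
          rcases lt_or_gt_of_ne (fun h => hi (Fin.ext h : i = ℓ) : (i:ℕ) ≠ (ℓ:ℕ)) with hlt | hgt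
          · -- i < ℓ : use reducedness
            have hℓpos : 0 < t ℓ := by
              have : ℓ ∈ t.support := htt ▸ (htopmem t ht.1).1
              exact Nat.pos_of_ne_zero (Finsupp.mem_support_iff.mp this)
            exact hred t ht.1 i ⟨ℓ, by rwa [Fin.lt_def], hℓpos⟩
          · -- i > ℓ: t i = 0
            have : i ∉ t.support := by
              intro hmem
              have := (htopmem t ht.1).2 i hmem
              rw [htt, Fin.le_def] at this
              omega
            rw [Finsupp.notMem_support_iff.mp this]
            exact Nat.zero_le _
      have hQ0' : Q = 0 := eq_zero_of_eval_eq_zero _ _ Q hQ0 hQmem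
      rw [hQ0'] at hcoeff
      simp only [MvPolynomial.coeff_zero] at hcoeff
      exact (MvPolynomial.mem_support_iff.mp hs) hcoeff.symm
    obtain ⟨s₀, hs₀⟩ := Finset.nonempty_iff_ne_empty.mpr
      (fun h => hG (MvPolynomial.support_eq_empty.mp h))
    exact key _ s₀ hs₀ rfl

lemma Rsub_inf_Zsub {q d : ℕ} (hq : 2 ≤ q) (hcard : Fintype.card Fq = q) :
    Rsub q m d Fq ⊓ Zsub m d Fq = ⊥ := by
  rw [eq_bot_iff]
  intro p hp
  rw [Submodule.mem_inf] at hp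
  obtain ⟨hpR, hpZ⟩ := hp
  rw [mem_Zsub_iff] at hpZ
  rw [Submodule.mem_bot]
  exact eq_zero_of_reduced_homog_eval_zero hq hcard p (reduced_of_mem_Rsub p hpR) hpZ.1 hpZ.2

noncomputable def degEquivSym (m d : ℕ) :
    {s : Fin (m+1) →₀ ℕ // ∑ i, s i = d} ≃ Sym (Fin (m+1)) d where
  toFun s := ⟨Finsupp.toMultiset s.1, by
    rw [Finsupp.card_toMultiset, Finsupp.sum_fintype _ _ (fun _ => rfl)]; exact s.2⟩
  invFun x := ⟨Multiset.toFinsupp x.1, by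
    have h := Finsupp.card_toMultiset (Multiset.toFinsupp x.1)
    rw [Multiset.toFinsupp_toMultiset, x.2] at h
    have h2 : (Multiset.toFinsupp (x.1 : Multiset (Fin (m+1)))).sum (fun _ => id)
        = ∑ i, (Multiset.toFinsupp (x.1 : Multiset (Fin (m+1)))) i :=
      Finsupp.sum_fintype _ _ (fun _ => rfl)
    omega⟩
  left_inv s := by
    ext i
    simp [Finsupp.toMultiset_toFinsupp]
  right_inv x := by
    ext i
    simp [Multiset.toFinsupp_toMultiset]

instance degFinite (m d : ℕ) : Finite {s : Fin (m+1) →₀ ℕ // ∑ i, s i = d} :=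
  Finite.of_equiv _ (degEquivSym m d).symm

lemma card_deg (m d : ℕ) :
    Nat.card {s : Fin (m+1) →₀ ℕ // ∑ i, s i = d} = (m+d).choose d := by
  rw [Nat.card_congr (degEquivSym m d), Nat.card_eq_fintype_card,
    Sym.card_sym_eq_choose, Fintype.card_fin]
  congr 1
  omega

lemma degSet_finite (m d : ℕ) : ({s : Fin (m+1) →₀ ℕ | ∑ i, s i = d}).Finite := by
  have : Finite ↥{s : Fin (m+1) →₀ ℕ | ∑ i, s i = d} := degFinite m d
  exact Set.toFinite _

lemma finrank_span_mon {m : ℕ} (S : Set (Fin (m+1) →₀ ℕ)) (hS : S.Finite) :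
    Module.finrank Fq (Submodule.span Fq
      ((fun s : Fin (m+1) →₀ ℕ => (monomial s (1:Fq))) '' S)) = S.ncard := by
  have : Fintype S := hS.fintype
  have hli : LinearIndependent Fq (fun s : S => (monomial (s : Fin (m+1) →₀ ℕ) (1:Fq))) := by
    have h := ((MvPolynomial.basisMonomials (Fin (m+1)) Fq).linearIndependent).comp
      (Subtype.val : S → _) Subtype.val_injective
    have heq : (⇑(MvPolynomial.basisMonomials (Fin (m+1)) Fq) ∘ (Subtype.val : S → _))
        = fun s : S => (monomial (s : Fin (m+1) →₀ ℕ) (1:Fq)) := by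
      funext s
      simp [coe_basisMonomials]
    rwa [heq] at h
  have hrange : Set.range (fun s : S => (monomial (s : Fin (m+1) →₀ ℕ) (1:Fq)))
      = (fun s : Fin (m+1) →₀ ℕ => (monomial s (1:Fq))) '' S := by
    rw [show (fun s : S => (monomial (s : Fin (m+1) →₀ ℕ) (1:Fq)))
      = (fun s : Fin (m+1) →₀ ℕ => (monomial s (1:Fq))) ∘ (Subtype.val : S → _) from rfl,
      Set.range_comp, Subtype.range_coe]
  rw [← hrange, finrank_span_eq_card hli]
  rw [← Nat.card_coe_set_eq, Nat.card_eq_fintype_card]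

lemma Wsub_eq_span (m d : ℕ) :
    homogeneousSubmodule (Fin (m+1)) Fq d = Submodule.span Fq
      ((fun s : Fin (m+1) →₀ ℕ => (monomial s (1:Fq))) '' {s | ∑ i, s i = d}) := by
  apply le_antisymm
  · intro p hp
    rw [mem_homogeneousSubmodule] at hp
    rw [← support_sum_monomial_coeff p]
    refine Submodule.sum_mem _ fun s hs => ?_
    have h1 : (monomial s) (coeff s p) = (coeff s p) • (monomial s (1:Fq)) := by
      rw [MvPolynomial.smul_monomial, smul_eq_mul, mul_one]
    rw [h1]
    exact Submodule.smul_mem _ _ (Submodule.subset_span ⟨s, sum_eq_of_mem_support hp hs, rfl⟩)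
  · rw [Submodule.span_le]
    rintro _ ⟨s, hsum, rfl⟩
    rw [SetLike.mem_coe, mem_homogeneousSubmodule]
    exact isHomogeneous_monomial _ (by rw [sum_coe]; exact hsum)

lemma finrank_W (m d : ℕ) :
    Module.finrank Fq (homogeneousSubmodule (Fin (m+1)) Fq d) = (m+d).choose d := by
  rw [Wsub_eq_span, finrank_span_mon _ (degSet_finite m d), ← card_deg m d,
    ← Nat.card_coe_set_eq]
  exact Nat.card_congr (Equiv.subtypeEquivRight (fun _ => Iff.rfl))

lemma finrank_R (q m d : ℕ) :
    Module.finrank Fq (Rsub q m d Fq) = (MbarDeg q m d).ncard := by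
  rw [Rsub, finrank_span_mon _ (Set.Finite.subset (degSet_finite m d) (fun s hs => hs.2))]
  have himg : MbarDeg q m d
      = (⇑(Finsupp.equivFunOnFinite : (Fin (m+1) →₀ ℕ) ≃ (Fin (m+1) → ℕ)))
        '' {s : Fin (m+1) →₀ ℕ | ProjReduced q m ⇑s ∧ ∑ i, s i = d} := by
    ext b
    constructor
    · rintro ⟨hred, hsum⟩
      refine ⟨Finsupp.equivFunOnFinite.symm b, ⟨?_, ?_⟩, by simp⟩
      · intro j hj
        simp only [Finsupp.coe_equivFunOnFinite_symm] at hj ⊢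
        exact hred j hj
      · simp only [Finsupp.coe_equivFunOnFinite_symm]
        exact hsum
    · rintro ⟨s, ⟨hred, hsum⟩, rfl⟩
      exact ⟨hred, hsum⟩
  rw [himg, Set.ncard_image_of_injective _ (Equiv.injective _)]

lemma card_degFun (m d : ℕ) :
    ({b : Fin (m+1) → ℕ | ∑ i, b i = d}).ncard = (m+d).choose d := by
  have himg : {b : Fin (m+1) → ℕ | ∑ i, b i = d}
      = (⇑(Finsupp.equivFunOnFinite : (Fin (m+1) →₀ ℕ) ≃ (Fin (m+1) → ℕ)))
        '' {s : Fin (m+1) →₀ ℕ | ∑ i, s i = d} := by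
    ext b
    constructor
    · intro hsum
      exact ⟨Finsupp.equivFunOnFinite.symm b, by simpa using hsum, by simp⟩
    · rintro ⟨s, hsum, rfl⟩
      exact hsum
  rw [himg, Set.ncard_image_of_injective _ (Equiv.injective _), ← card_deg m d,
    ← Nat.card_coe_set_eq]
  exact Nat.card_congr (Equiv.subtypeEquivRight (fun _ => Iff.rfl))

lemma finite_R_W_Z (q m d : ℕ) :
    FiniteDimensional Fq (homogeneousSubmodule (Fin (m+1)) Fq d) := by
  rw [Wsub_eq_span]
  exact FiniteDimensional.span_of_finite Fq (Set.Finite.image _ (degSet_finite m d))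

lemma finrank_Z (q m d : ℕ) (hq : 2 ≤ q) (hcard : Fintype.card Fq = q) :
    Module.finrank Fq (Zsub m d Fq) = (m+d).choose d - (MbarDeg q m d).ncard := by
  have hW : FiniteDimensional Fq (homogeneousSubmodule (Fin (m+1)) Fq d) := finite_R_W_Z q m d
  have hRW : Rsub q m d Fq ≤ homogeneousSubmodule (Fin (m+1)) Fq d := Rsub_le_homog q d
  have hZW : Zsub m d Fq ≤ homogeneousSubmodule (Fin (m+1)) Fq d := inf_le_left
  have hRfd : FiniteDimensional Fq (Rsub q m d Fq) := Submodule.finiteDimensional_of_le hRW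
  have hZfd : FiniteDimensional Fq (Zsub m d Fq) := Submodule.finiteDimensional_of_le hZW
  have hsup : Rsub q m d Fq ⊔ Zsub m d Fq = homogeneousSubmodule (Fin (m+1)) Fq d :=
    le_antisymm (sup_le hRW hZW) (homog_le_Rsub_sup_Zsub hq hcard)
  have heq := Submodule.finrank_sup_add_finrank_inf_eq (Rsub q m d Fq) (Zsub m d Fq)
  rw [hsup, Rsub_inf_Zsub hq hcard, finrank_bot, finrank_W, finrank_R] at heq
  omega

set_option maxHeartbeats 1000000

variable {Fq : Type} [Field Fq] [Fintype Fq]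

instance projFinite (m : ℕ) : Finite (Projectivization Fq (Fin (m+1) → Fq)) := by
  unfold Projectivization
  infer_instance

lemma projPoints_le {m r : ℕ} (F : Fin r → MvPolynomial (Fin (m+1)) Fq) :
    projPoints F ≤ Nat.card (Projectivization Fq (Fin (m+1) → Fq)) := by
  rw [projPoints, ← Set.ncard_univ]
  exact Set.ncard_le_ncard (Set.subset_univ _) Set.finite_univ

lemma sSup_le_sSup_nat {S T : Set ℕ} (hS : BddAbove S) (hT : BddAbove T)
    (h : ∀ n ∈ S, ∃ k ∈ T, n ≤ k) : sSup S ≤ sSup T := by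
  rcases S.eq_empty_or_nonempty with rfl | hne
  · rw [csSup_empty]
    exact Nat.zero_le _
  · obtain ⟨k, hk, hle⟩ := h _ (Nat.sSup_mem hne hS)
    exact hle.trans (le_csSup hT hk)

lemma bdd_proj_set {m : ℕ} (S : Set ℕ)
    (h : ∀ n ∈ S, ∃ r : ℕ, ∃ F : Fin r → MvPolynomial (Fin (m+1)) Fq, n = projPoints F) :
    BddAbove S := by
  refine ⟨Nat.card (Projectivization Fq (Fin (m+1) → Fq)), fun n hn => ?_⟩
  obtain ⟨r, F, rfl⟩ := h n hn
  exact projPoints_le F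

lemma ebar_le_er {q m d r rd : ℕ} (hq : 2 ≤ q) (hcard : Fintype.card Fq = q)
    (hrd : rd = (m+d).choose d - (MbarDeg q m d).ncard) :
    ebar q Fq d m r ≤ er Fq d m (r + rd) := by
  rw [ebar, er]
  apply sSup_le_sSup_nat
  · exact bdd_proj_set _ (by rintro n ⟨F, -, -, -, rfl⟩; exact ⟨_, F, rfl⟩)
  · exact bdd_proj_set _ (by rintro n ⟨F, -, -, rfl⟩; exact ⟨_, F, rfl⟩)
  rintro n ⟨F, hli, hhom, hred, rfl⟩
  have hfr : rd ≤ Module.finrank Fq (Zsub m d Fq) := by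
    rw [finrank_Z q m d hq hcard, ← hrd]
  obtain ⟨g, hg⟩ := exists_linearIndependent_of_le_finrank hfr
  set z : Fin rd → MvPolynomial (Fin (m+1)) Fq := fun i => (g i : _) with hzdef
  have hz : LinearIndependent Fq z := hg.map' (Zsub m d Fq).subtype (Submodule.ker_subtype _)
  have hzZ : ∀ i, z i ∈ Zsub m d Fq := fun i => (g i).2
  have hFR : ∀ i, F i ∈ Rsub q m d Fq := fun i => mem_Rsub_of_reduced _ (hred i) (hhom i)
  set Fc : Fin (r + rd) → MvPolynomial (Fin (m+1)) Fq :=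
    (Sum.elim F z) ∘ ⇑finSumFinEquiv.symm with hFc
  have hFcl : ∀ j : Fin r, Fc (finSumFinEquiv (Sum.inl j : Fin r ⊕ Fin rd)) = F j := by
    intro j; rw [hFc]; simp
  have hFcr : ∀ j : Fin rd, Fc (finSumFinEquiv (Sum.inr j : Fin r ⊕ Fin rd)) = z j := by
    intro j; rw [hFc]; simp
  refine ⟨projPoints Fc, ⟨Fc, ?_, ?_, rfl⟩, ?_⟩
  · have h1 : Submodule.span Fq (Set.range F) ≤ Rsub q m d Fq :=
      Submodule.span_le.mpr (Set.range_subset_iff.mpr hFR)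
    have h2 : Submodule.span Fq (Set.range z) ≤ Zsub m d Fq :=
      Submodule.span_le.mpr (Set.range_subset_iff.mpr hzZ)
    have hdisj : Disjoint (Submodule.span Fq (Set.range F)) (Submodule.span Fq (Set.range z)) :=
      Disjoint.mono h1 h2 (disjoint_iff.mpr (Rsub_inf_Zsub hq hcard))
    exact (hli.sum_type hz hdisj).comp _ (Equiv.injective _)
  · intro i
    obtain ⟨u, rfl⟩ : ∃ u, finSumFinEquiv u = i := ⟨finSumFinEquiv.symm i, by simp⟩
    rcases u with j | j
    · rw [hFcl j]; exact hhom j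
    · rw [hFcr j]; exact ((mem_Zsub_iff _).mp (hzZ j)).1
  · apply le_of_eq
    rw [projPoints, projPoints]
    congr 1
    ext p
    simp only [Set.mem_setOf_eq]
    constructor
    · intro h i
      obtain ⟨u, rfl⟩ : ∃ u, finSumFinEquiv u = i := ⟨finSumFinEquiv.symm i, by simp⟩
      rcases u with j | j
      · rw [hFcl j]; exact h j
      · rw [hFcr j]; exact ((mem_Zsub_iff _).mp (hzZ j)).2 p.rep
    · intro h j
      have h2 := h (finSumFinEquiv (Sum.inl j : Fin r ⊕ Fin rd))
      rwa [hFcl j] at h2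

lemma er_le_ebar {q m d r rd : ℕ} (hq : 2 ≤ q) (hcard : Fintype.card Fq = q)
    (hrd : rd = (m+d).choose d - (MbarDeg q m d).ncard) :
    er Fq d m (r + rd) ≤ ebar q Fq d m r := by
  rw [ebar, er]
  apply sSup_le_sSup_nat
  · exact bdd_proj_set _ (by rintro n ⟨F, -, -, rfl⟩; exact ⟨_, F, rfl⟩)
  · exact bdd_proj_set _ (by rintro n ⟨F, -, -, -, rfl⟩; exact ⟨_, F, rfl⟩)
  rintro n ⟨F, hli, hhom, rfl⟩
  set P := Submodule.span Fq (Set.range F) with hP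
  have hPfd : FiniteDimensional Fq P := FiniteDimensional.span_of_finite _ (Set.finite_range F)
  have hfrP : Module.finrank Fq P = r + rd := by
    rw [hP, finrank_span_eq_card hli, Fintype.card_fin]
  have hPW : P ≤ homogeneousSubmodule (Fin (m+1)) Fq d :=
    Submodule.span_le.mpr (Set.range_subset_iff.mpr
      (fun i => (mem_homogeneousSubmodule _ _).mpr (hhom i)))
  haveI hWfd : FiniteDimensional Fq (homogeneousSubmodule (Fin (m+1)) Fq d) :=
    finite_R_W_Z q m d
  haveI hZfd : FiniteDimensional Fq (Zsub m d Fq) :=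
    Submodule.finiteDimensional_of_le (inf_le_left)
  set π := (Zsub m d Fq).mkQ with hπ
  set L := π.comp P.subtype with hL
  have hker : Module.finrank Fq (LinearMap.ker L) ≤ rd := by
    have h1 : Submodule.map P.subtype (LinearMap.ker L) ≤ Zsub m d Fq := by
      rintro x ⟨y, hy, rfl⟩
      have h2 : (y : MvPolynomial (Fin (m+1)) Fq) ∈ LinearMap.ker π := hy
      rwa [hπ, Submodule.ker_mkQ] at h2
    calc Module.finrank Fq (LinearMap.ker L)
        = Module.finrank Fq (Submodule.map P.subtype (LinearMap.ker L)) :=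
          (Submodule.finrank_map_subtype_eq P _).symm
      _ ≤ Module.finrank Fq (Zsub m d Fq) := Submodule.finrank_mono h1
      _ = rd := by rw [finrank_Z q m d hq hcard, ← hrd]
  have hrange := LinearMap.finrank_range_add_finrank_ker L
  rw [hfrP] at hrange
  have hr_le : r ≤ Module.finrank Fq (LinearMap.range L) := by omega
  obtain ⟨u, hu⟩ := exists_linearIndependent_of_le_finrank hr_le
  have hv : LinearIndependent Fq
      (fun i => ((u i : _) : MvPolynomial (Fin (m+1)) Fq ⧸ Zsub m d Fq)) :=
    hu.map' (LinearMap.range L).subtype (Submodule.ker_subtype _)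
  have hlift : ∀ i, ∃ gR, gR ∈ Rsub q m d Fq ∧ gR ∈ P ⊔ Zsub m d Fq ∧ π gR = (u i : _) := by
    intro i
    obtain ⟨y, hy⟩ := (u i).2
    have hyW : (y : MvPolynomial (Fin (m+1)) Fq) ∈ homogeneousSubmodule (Fin (m+1)) Fq d :=
      hPW y.2
    obtain ⟨gR, hgR, gZ, hgZ, hsum⟩ :=
      Submodule.mem_sup.mp (homog_le_Rsub_sup_Zsub hq hcard hyW)
    refine ⟨gR, hgR, ?_, ?_⟩
    · rw [Submodule.mem_sup]
      exact ⟨(y : MvPolynomial (Fin (m+1)) Fq), y.2, -gZ, neg_mem hgZ, by rw [← hsum]; ring⟩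
    · have hπz : π gZ = 0 := by
        rw [hπ, Submodule.mkQ_apply]
        exact (Submodule.Quotient.mk_eq_zero _).mpr hgZ
      have h3 : π gR = π (y : MvPolynomial (Fin (m+1)) Fq) := by
        rw [← hsum, map_add, hπz, add_zero]
      rw [h3]
      exact hy
  choose G hGR hGPZ hGπ using hlift
  refine ⟨projPoints G, ⟨G, ?_, ?_, ?_, rfl⟩, ?_⟩
  · apply LinearIndependent.of_comp π
    have h4 : ⇑π ∘ G = fun i => ((u i : _) : MvPolynomial (Fin (m+1)) Fq ⧸ Zsub m d Fq) :=
      funext hGπ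
    rw [h4]
    exact hv
  · intro i
    exact (mem_homogeneousSubmodule _ _).mp (Rsub_le_homog q d (hGR i))
  · intro i
    exact reduced_of_mem_Rsub _ (hGR i)
  · rw [projPoints, projPoints]
    apply Set.ncard_le_ncard ?_ (Set.toFinite _)
    intro p hp i
    have hkv : P ⊔ Zsub m d Fq ≤ LinearMap.ker ((MvPolynomial.aeval (R := Fq) p.rep).toLinearMap) := by
      apply sup_le
      · rw [hP, Submodule.span_le, Set.range_subset_iff]
        intro j
        rw [SetLike.mem_coe, LinearMap.mem_ker, aeval_lm]
        exact hp j
      · intro x hx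
        rw [LinearMap.mem_ker, aeval_lm]
        exact ((mem_Zsub_iff _).mp hx).2 p.rep
    have h5 := hkv (hGPZ i)
    rwa [LinearMap.mem_ker, aeval_lm] at h5

end Aux9

namespace Aux9

lemma MbarDeg_all {q m d : ℕ} (hdq : d ≤ q) :
    MbarDeg q m d = {b : Fin (m+1) → ℕ | ∑ i, b i = d} := by
  ext b
  refine ⟨fun h => h.2, fun hsum => ⟨?_, hsum⟩⟩
  rintro j ⟨l, hjl, hl⟩
  have hne : j ≠ l := ne_of_lt hjl
  have hpair : b j + b l ≤ ∑ i, b i := by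
    rw [← Finset.sum_pair hne]
    exact Finset.sum_le_sum_of_subset (Finset.subset_univ _)
  simp only [Set.mem_setOf_eq] at hsum
  omega

end Aux9

/-- `e_{r + r_d}(d, m) = ē_r(d, m)`; in particular
`e_r(d, m) = ē_r(d, m)` whenever `d ≤ q`. -/
theorem statement_9 (q m d r rd : ℕ) (hq : IsPrimePow q) (hm : 0 < m)
    (Fq : Type) [Field Fq] [Fintype Fq] (hcard : Fintype.card Fq = q)
    (hrd : rd = (m+d).choose d - (MbarDeg q m d).ncard)
    (hr1 : 1 ≤ r) (hr2 : r ≤ (m+d).choose d - rd) :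
    er Fq d m (r + rd) = ebar q Fq d m r ∧
    (d ≤ q → er Fq d m r = ebar q Fq d m r) := by
  have hq2 : 2 ≤ q := hq.one_lt
  have hmain : er Fq d m (r + rd) = ebar q Fq d m r :=
    le_antisymm (Aux9.er_le_ebar hq2 hcard hrd) (Aux9.ebar_le_er hq2 hcard hrd)
  refine ⟨hmain, fun hdq => ?_⟩
  have h0 : rd = 0 := by
    rw [hrd, Aux9.MbarDeg_all hdq, Aux9.card_degFun]
    omega
  have hmain' := hmain
  rwa [h0, add_zero] at hmain'
end
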